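/- arXiv:1801.00977 — 10 statements merged into one kernel-verified Lean document; each statement's English description precedes it below -/
import Mathlib

section
/- For a real random variable X and every x ∈ ℝ, the identity idf_X(x) = E[(x−X)⁺ − X⁻] = E[(X−x)⁺ − X⁺ + x] holds (where the expectations are well defined since the integrands are bounded in absolute value by |x|). -/
open MeasureTheory Filter Set

noncomputable def cdf {Ω : Type*} [MeasurableSpace Ω] (P : Measure Ω) (X : Ω → ℝ) : ℝ → ℝ :=
  fun x => (P {ω | X ω ≤ x}).toReal

noncomputable def idf {Ω : Type*} [MeasurableSpace Ω] (P : Measure Ω) (X : Ω → ℝ) : ℝ → ℝ :=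
  fun x => ∫ t in (0:ℝ)..x, cdf P X t

noncomputable def iqf {Ω : Type*} [MeasurableSpace Ω] (P : Measure Ω) (X : Ω → ℝ) : ℝ → EReal :=
  fun u => ⨆ x : ℝ, ((x * u - idf P X x : ℝ) : EReal)

lemma key {Ω : Type*} [MeasurableSpace Ω] (P : Measure Ω) [IsProbabilityMeasure P]
    (X : Ω → ℝ) (hX : Measurable X) (a b : ℝ) (hab : a ≤ b) :
    ∫ t in a..b, cdf P X t = ∫ ω, (max (b - X ω) 0 - max (a - X ω) 0) ∂P := by
  have hpt : ∀ ω, max (b - X ω) 0 - max (a - X ω) 0 = max (b - max a (X ω)) 0 := by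
    intro ω
    rcases le_total (X ω) a with h | h
    · rw [max_eq_left (by linarith : (0:ℝ) ≤ b - X ω), max_eq_left (by linarith : (0:ℝ) ≤ a - X ω),
        max_eq_left h, max_eq_left (by linarith : (0:ℝ) ≤ b - a)]
      ring
    · rw [max_eq_right (by linarith : a - X ω ≤ 0), max_eq_right h, sub_zero]
  have hcdf_meas : Measurable (cdf P X) := by
    apply Monotone.measurable
    intro s t hst
    exact ENNReal.toReal_mono (measure_ne_top _ _)
      (measure_mono (fun ω (h : X ω ≤ s) => le_trans h hst))
  have hvol : ∀ c : ℝ, volume (Ici c ∩ Ioc a b) = ENNReal.ofReal (b - max a c) := by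
    intro c
    rcases le_or_gt c a with h | h
    · rw [max_eq_left h]
      have : Ici c ∩ Ioc a b = Ioc a b :=
        inter_eq_right.2 (fun t ht => le_trans h (le_of_lt ht.1))
      rw [this, Real.volume_Ioc]
    · rw [max_eq_right h.le]
      have : Ici c ∩ Ioc a b = Icc c b := by
        ext t
        simp only [mem_inter_iff, mem_Ici, mem_Ioc, mem_Icc]
        exact ⟨fun ⟨h1, _, h3⟩ => ⟨h1, h3⟩, fun ⟨h1, h2⟩ => ⟨h1, lt_of_lt_of_le h h1, h2⟩⟩
      rw [this, Real.volume_Icc]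
  set S : Set (ℝ × Ω) := {p | X p.2 ≤ p.1} with hS
  have hSm : MeasurableSet S := by
    have : S = (fun p : ℝ × Ω => (X p.2, p.1)) ⁻¹' {q : ℝ × ℝ | q.1 ≤ q.2} := rfl
    rw [this]
    exact (measurableSet_le measurable_fst measurable_snd).preimage
      ((hX.comp measurable_snd).prodMk measurable_fst)
  have h2 : ∫⁻ t in Ioc a b, P {ω | X ω ≤ t}
      = ∫⁻ ω, ENNReal.ofReal (b - max a (X ω)) ∂P := by
    have swap := lintegral_lintegral_swap (μ := volume.restrict (Ioc a b)) (ν := P)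
      (f := fun t ω => S.indicator (fun _ => (1:ENNReal)) (t, ω))
      (((measurable_indicator_const_iff 1).2 hSm).comp
        (measurable_fst.prodMk measurable_snd)).aemeasurable
    calc ∫⁻ t in Ioc a b, P {ω | X ω ≤ t}
        = ∫⁻ t in Ioc a b, ∫⁻ ω, S.indicator (fun _ => (1:ENNReal)) (t, ω) ∂P := by
          apply lintegral_congr
          intro t
          rw [← lintegral_indicator_one (measurableSet_le hX measurable_const)]
          apply lintegral_congr
          intro ω
          by_cases h : X ω ≤ t <;> simp [hS, indicator, h]
      _ = ∫⁻ ω, ∫⁻ t in Ioc a b, S.indicator (fun _ => (1:ENNReal)) (t, ω) ∂volume ∂P := swap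
      _ = ∫⁻ ω, ENNReal.ofReal (b - max a (X ω)) ∂P := by
          apply lintegral_congr
          intro ω
          calc ∫⁻ t in Ioc a b, S.indicator (fun _ => (1:ENNReal)) (t, ω) ∂volume
              = ∫⁻ t in Ioc a b, (Ici (X ω)).indicator 1 t ∂volume := by
                apply lintegral_congr
                intro t
                by_cases h : X ω ≤ t <;> simp [hS, indicator, h, mem_Ici]
            _ = volume.restrict (Ioc a b) (Ici (X ω)) := lintegral_indicator_one measurableSet_Ici
            _ = volume (Ici (X ω) ∩ Ioc a b) := Measure.restrict_apply measurableSet_Ici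
            _ = ENNReal.ofReal (b - max a (X ω)) := hvol _
  have h1 : ∫ t in a..b, cdf P X t = (∫⁻ t in Ioc a b, P {ω | X ω ≤ t}).toReal := by
    rw [intervalIntegral.integral_of_le hab]
    simp only [cdf]
    rw [integral_eq_lintegral_of_nonneg_ae (ae_of_all _ fun t => ENNReal.toReal_nonneg)
        hcdf_meas.aestronglyMeasurable]
    congr 1
    apply lintegral_congr
    intro t
    exact ENNReal.ofReal_toReal (measure_ne_top _ _)
  have h3 : ∫ ω, (max (b - X ω) 0 - max (a - X ω) 0) ∂P
      = (∫⁻ ω, ENNReal.ofReal (b - max a (X ω)) ∂P).toReal := by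
    simp_rw [hpt]
    rw [integral_eq_lintegral_of_nonneg_ae
      (f := fun ω => max (b - max a (X ω)) 0)
      (ae_of_all _ fun ω => le_max_right _ _)
      ((((measurable_const.sub (measurable_const.max hX)).max measurable_const)).aestronglyMeasurable)]
    congr 1
    apply lintegral_congr
    intro ω
    rcases le_total (b - max a (X ω)) 0 with h | h
    · rw [max_eq_right h, ENNReal.ofReal_eq_zero.2 h, ENNReal.ofReal_zero]
    · rw [max_eq_left h]
  rw [h1, h2, h3]

theorem stmt2 {Ω : Type*} [MeasurableSpace Ω] (P : Measure Ω) [IsProbabilityMeasure P]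
    (X : Ω → ℝ) (hX : Measurable X) (x : ℝ) :
    idf P X x = ∫ ω, (max (x - X ω) 0 - max (-(X ω)) 0) ∂P ∧
    idf P X x = ∫ ω, (max (X ω - x) 0 - max (X ω) 0 + x) ∂P := by
  have habs : ∀ c : ℝ, max c 0 - max (-c) 0 = c := by
    intro c
    rcases le_total c 0 with h | h
    · rw [max_eq_right h, max_eq_left (by linarith : (0:ℝ) ≤ -c)]; ring
    · rw [max_eq_left h, max_eq_right (by linarith : -c ≤ 0)]; ring
  have hfst : idf P X x = ∫ ω, (max (x - X ω) 0 - max (-(X ω)) 0) ∂P := by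
    rcases le_total 0 x with hx | hx
    · have h := key P X hX 0 x hx
      simp only [zero_sub] at h
      exact h
    · have h := key P X hX x 0 hx
      have h' : idf P X x = -∫ t in x..(0:ℝ), cdf P X t := by
        rw [idf, intervalIntegral.integral_symm]
      rw [h', h, ← integral_neg]
      apply integral_congr_ae
      filter_upwards with ω
      simp only [zero_sub]
      ring
  refine ⟨hfst, ?_⟩
  rw [hfst]
  apply integral_congr_ae
  filter_upwards with ω
  have e1 := habs (x - X ω)
  have e2 := habs (X ω - x)
  have e3 := habs (X ω)
  have e4 := habs (-(X ω))
  have : -(x - X ω) = X ω - x := by ring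
  rw [this] at e1
  have : -(X ω - x) = x - X ω := by ring
  rw [this] at e2
  have : -(-(X ω)) = X ω := by ring
  rw [this] at e4
  linarith
end

section
/- For a real random variable X, lim_{x→−∞} idf_X(x) = −E[X⁻] and lim_{x→+∞} (x − idf_X(x)) = E[X⁺], where both limits may be interpreted in [−∞, ∞] (E[X⁻] or E[X⁺] may be infinite). -/
open MeasureTheory Filter Set
open scoped ENNReal NNReal

lemma aux_tendsto_setLIntegral_Ioc (g : ℝ → ℝ≥0∞) :
    Tendsto (fun x : ℝ => ∫⁻ t in Ioc (0:ℝ) x, g t) atTop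
      (nhds (∫⁻ t in Ioi (0:ℝ), g t)) := by
  have hmono : Monotone fun x : ℝ => ∫⁻ t in Ioc (0:ℝ) x, g t :=
    fun a b hab => lintegral_mono_set (Ioc_subset_Ioc_right hab)
  have hU : (Ioi (0:ℝ)) = ⋃ n : ℕ, Ioc (0:ℝ) n := by
    ext t
    simp only [mem_Ioi, mem_iUnion, mem_Ioc]
    constructor
    · intro ht; obtain ⟨n, hn⟩ := exists_nat_ge t; exact ⟨n, ht, hn⟩
    · rintro ⟨n, h, _⟩; exact h
  have hsup : (∫⁻ t in Ioi (0:ℝ), g t) = ⨆ x : ℝ, ∫⁻ t in Ioc (0:ℝ) x, g t := by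
    apply le_antisymm
    · rw [hU, setLIntegral_iUnion_of_directed g
        ((monotone_nat_of_le_succ fun n => Ioc_subset_Ioc_right (by exact_mod_cast n.le_succ)).directed_le)]
      exact iSup_le fun n => le_iSup (fun x : ℝ => ∫⁻ t in Ioc (0:ℝ) x, g t) (n : ℝ)
    · exact iSup_le fun x => lintegral_mono_set Ioc_subset_Ioi_self
  rw [hsup]
  exact tendsto_atTop_iSup hmono

lemma aux_coe_toReal {a : ℝ≥0∞} (h : a ≠ ⊤) : ((a.toReal : ℝ) : EReal) = (a : EReal) := by
  lift a to ℝ≥0 using h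
  rfl

theorem stmt3 {Ω : Type*} [MeasurableSpace Ω] (P : Measure Ω) [IsProbabilityMeasure P]
    (X : Ω → ℝ) (hX : Measurable X) :
    Tendsto (fun x : ℝ => ((idf P X x : ℝ) : EReal)) atBot
      (nhds (-((∫⁻ ω, ENNReal.ofReal (max (-(X ω)) 0) ∂P : ENNReal) : EReal))) ∧
    Tendsto (fun x : ℝ => ((x - idf P X x : ℝ) : EReal)) atTop
      (nhds ((∫⁻ ω, ENNReal.ofReal (max (X ω) 0) ∂P : ENNReal) : EReal)) := by
  -- measurability of cdf
  have hFmono : Monotone (cdf P X) := fun a b hab =>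
    ENNReal.toReal_mono (measure_ne_top P _) (measure_mono fun ω hω => le_trans hω hab)
  have hFmeas : Measurable (cdf P X) := hFmono.measurable
  have hFnn : ∀ t, 0 ≤ cdf P X t := fun t => ENNReal.toReal_nonneg
  -- the integral of cdf over Ioc a b as a lintegral
  have key : ∀ a b : ℝ, a ≤ b →
      (∫ t in a..b, cdf P X t) = (∫⁻ t in Ioc a b, P {ω | X ω ≤ t}).toReal := by
    intro a b hab
    rw [intervalIntegral.integral_of_le hab,
      integral_eq_lintegral_of_nonneg_ae (Eventually.of_forall fun t => hFnn t)
        hFmeas.aestronglyMeasurable.restrict]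
    congr 1
    refine lintegral_congr fun t => ?_
    exact ENNReal.ofReal_toReal (measure_ne_top P _)
  -- finiteness of the Ioc lintegrals
  have hfin : ∀ (g : ℝ → ℝ≥0∞), (∀ t, g t ≤ 1) → ∀ y : ℝ,
      (∫⁻ t in Ioc (0:ℝ) y, g t) ≠ ⊤ := by
    intro g hg y
    refine ne_top_of_le_ne_top ?_ (lintegral_mono fun t => hg t)
    simp [Real.volume_Ioc]
  constructor
  · -- negative part
    set h : ℝ → ℝ≥0∞ := fun s => P {ω | X ω ≤ -s} with hh
    have hle1 : ∀ s, h s ≤ 1 := fun s => prob_le_one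
    -- layercake
    have hlc : (∫⁻ ω, ENNReal.ofReal (max (-(X ω)) 0) ∂P) = ∫⁻ s in Ioi (0:ℝ), h s := by
      rw [lintegral_eq_lintegral_meas_le (f := fun ω => max (-(X ω)) 0) P
        (Eventually.of_forall fun ω => le_max_right _ _)
        ((hX.neg.max measurable_const).aemeasurable)]
      refine lintegral_congr_ae ?_
      filter_upwards [ae_restrict_mem measurableSet_Ioi] with t ht
      have : {a | t ≤ max (-(X a)) 0} = {ω | X ω ≤ -t} := by
        ext a
        simp only [mem_setOf_eq, le_max_iff]
        constructor
        · rintro (h' | h')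
          · linarith
          · exact absurd (lt_of_lt_of_le ht h') (lt_irrefl 0)
        · intro h'; left; linarith
      rw [this]
    -- change of variables: integral over Ioc x 0 of P{X ≤ t} equals over Ioc 0 (-x) of h
    have hcov : ∀ x : ℝ, x ≤ 0 →
        (∫⁻ t in Ioc x 0, P {ω | X ω ≤ t}) = ∫⁻ s in Ioc (0:ℝ) (-x), h s := by
      intro x hx
      have h1 : (∫⁻ t in Ioc x 0, P {ω | X ω ≤ t}) =
          ∫⁻ t, (Ioc x 0).indicator (fun t => P {ω | X ω ≤ t}) t := by
        rw [← lintegral_indicator measurableSet_Ioc]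
      have h2 : (∫⁻ s in Ioc (0:ℝ) (-x), h s) = ∫⁻ s in Ico (0:ℝ) (-x), h s := by
        refine setLIntegral_congr ?_
        exact (Ioc_ae_eq_Icc).trans (Ico_ae_eq_Icc).symm
      have hGmeas : Measurable fun t : ℝ => P {ω | X ω ≤ t} :=
        Monotone.measurable fun a b hab => measure_mono fun ω hω => le_trans hω hab
      have hind : Measurable ((Ioc x 0).indicator fun t => P {ω | X ω ≤ t}) :=
        hGmeas.indicator measurableSet_Ioc
      rw [h1, h2, ← lintegral_indicator measurableSet_Ico,
        ← (Measure.measurePreserving_neg (volume : Measure ℝ)).lintegral_comp hind]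
      refine lintegral_congr fun s => ?_
      show (Ioc x 0).indicator (fun t => P {ω | X ω ≤ t}) (-s) = _
      by_cases hs : s ∈ Ico (0:ℝ) (-x)
      · have hs' : -s ∈ Ioc x 0 := by
          simp only [mem_Ico] at hs
          constructor <;> [linarith [hs.2]; linarith [hs.1]]
        rw [indicator_of_mem hs' _, indicator_of_mem hs]
      · have hs' : -s ∉ Ioc x 0 := by
          simp only [mem_Ico, not_and_or, not_le, not_lt] at hs
          simp only [mem_Ioc, not_and_or, not_le, not_lt]
          rcases hs with h' | h'
          · right; linarith
          · left; linarith
        rw [indicator_of_notMem hs' _, indicator_of_notMem hs]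
    -- the real-valued identity
    have hev : (fun x : ℝ => ((idf P X x : ℝ) : EReal)) =ᶠ[atBot]
        fun x => -(((∫⁻ s in Ioc (0:ℝ) (-x), h s) : ℝ≥0∞) : EReal) := by
      filter_upwards [eventually_le_atBot (0:ℝ)] with x hx
      have : idf P X x = -((∫⁻ s in Ioc (0:ℝ) (-x), h s).toReal) := by
        rw [idf, intervalIntegral.integral_symm, key x 0 hx, hcov x hx]
      rw [this]
      push_cast
      rw [aux_coe_toReal (hfin h hle1 (-x))]
    rw [hlc]
    refine Tendsto.congr' hev.symm ?_
    have : Tendsto (fun x : ℝ => ∫⁻ s in Ioc (0:ℝ) (-x), h s) atBot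
        (nhds (∫⁻ s in Ioi (0:ℝ), h s)) :=
      (aux_tendsto_setLIntegral_Ioc h).comp tendsto_neg_atBot_atTop
    exact (EReal.tendsto_coe_ennreal.2 this).neg
  · -- positive part
    set h : ℝ → ℝ≥0∞ := fun t => P {ω | t < X ω} with hh
    have hle1 : ∀ t, h t ≤ 1 := fun t => prob_le_one
    have hlc : (∫⁻ ω, ENNReal.ofReal (max (X ω) 0) ∂P) = ∫⁻ t in Ioi (0:ℝ), h t := by
      rw [lintegral_eq_lintegral_meas_lt (f := fun ω => max (X ω) 0) P
        (Eventually.of_forall fun ω => le_max_right _ _)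
        ((hX.max measurable_const).aemeasurable)]
      refine lintegral_congr_ae ?_
      filter_upwards [ae_restrict_mem measurableSet_Ioi] with t ht
      have : {a | t < max (X a) 0} = {ω | t < X ω} := by
        ext a
        simp only [mem_setOf_eq, lt_max_iff]
        constructor
        · rintro (h' | h')
          · exact h'
          · exact absurd (lt_trans ht h') (lt_irrefl 0)
        · intro h'; left; exact h'
      rw [this]
    have hsplit : ∀ x : ℝ, 0 ≤ x →
        x - idf P X x = (∫⁻ t in Ioc (0:ℝ) x, h t).toReal := by
      intro x hx
      have hcompl : ∀ t : ℝ, P {ω | X ω ≤ t} + h t = 1 := by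
        intro t
        have hset : {ω | t < X ω} = {ω | X ω ≤ t}ᶜ := by
          ext ω; simp [not_le]
        show P {ω | X ω ≤ t} + P {ω | t < X ω} = 1
        rw [hset, measure_add_measure_compl (measurableSet_le hX measurable_const),
          measure_univ]
      have hsum : (∫⁻ t in Ioc (0:ℝ) x, P {ω | X ω ≤ t}) + (∫⁻ t in Ioc (0:ℝ) x, h t)
          = ENNReal.ofReal x := by
        rw [← lintegral_add_left (f := fun t : ℝ => P {ω | X ω ≤ t})
          (Monotone.measurable fun a b hab => measure_mono fun ω hω => le_trans hω hab) h]
        simp only [hcompl]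
        simp [Real.volume_Ioc, hx]
      have hf1 : (∫⁻ t in Ioc (0:ℝ) x, P {ω | X ω ≤ t}) ≠ ⊤ :=
        hfin _ (fun t => prob_le_one) x
      have hf2 : (∫⁻ t in Ioc (0:ℝ) x, h t) ≠ ⊤ := hfin h hle1 x
      have := congrArg ENNReal.toReal hsum
      rw [ENNReal.toReal_add hf1 hf2, ENNReal.toReal_ofReal hx] at this
      rw [idf, key 0 x hx]
      linarith
    have hev : (fun x : ℝ => ((x - idf P X x : ℝ) : EReal)) =ᶠ[atTop]
        fun x => (((∫⁻ t in Ioc (0:ℝ) x, h t) : ℝ≥0∞) : EReal) := by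
      filter_upwards [eventually_ge_atTop (0:ℝ)] with x hx
      rw [hsplit x hx, aux_coe_toReal (hfin h hle1 x)]
    refine Tendsto.congr' hev.symm ?_
    rw [hlc]
    exact EReal.tendsto_coe_ennreal.2 (aux_tendsto_setLIntegral_Ioc h)
end

section
/- For a real random variable X, lim_{x→−∞} idf_X(x)/x = 0 and lim_{x→+∞} idf_X(x)/x = 1. -/
open MeasureTheory Filter Set

lemma aux_top (F : ℝ → ℝ) (hmono : Monotone F) (h0 : ∀ t, 0 ≤ F t) (h1 : ∀ t, F t ≤ 1)
    (htop : Tendsto F atTop (nhds 1)) :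
    Tendsto (fun x => (∫ t in (0:ℝ)..x, F t) / x) atTop (nhds 1) := by
  have hint : ∀ a b : ℝ, IntervalIntegrable F volume a b := fun a b => hmono.intervalIntegrable
  rw [Metric.tendsto_nhds]
  intro ε hε
  obtain ⟨M, hM⟩ : ∃ M : ℝ, ∀ t ≥ M, 1 - ε/2 < F t := by
    have := htop.eventually (eventually_gt_nhds (show 1 - ε/2 < 1 by linarith))
    exact eventually_atTop.1 this
  set M' := max M 0 with hM'
  have hM'0 : 0 ≤ M' := le_max_right _ _
  have hlim : Tendsto (fun x : ℝ => (x - M') * (1 - ε/2) / x) atTop (nhds (1 - ε/2)) := by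
    have h1 : Tendsto (fun x : ℝ => (1 - ε/2) - (M' * (1 - ε/2)) * x⁻¹) atTop
        (nhds ((1 - ε/2) - (M' * (1 - ε/2)) * 0)) :=
      tendsto_const_nhds.sub (tendsto_inv_atTop_zero.const_mul _)
    rw [mul_zero, sub_zero] at h1
    refine h1.congr' ?_
    filter_upwards [eventually_gt_atTop (0:ℝ)] with x hx
    field_simp
  have hev : ∀ᶠ x : ℝ in atTop, 1 - ε < (x - M') * (1 - ε/2) / x :=
    hlim.eventually (eventually_gt_nhds (by linarith))
  filter_upwards [hev, eventually_ge_atTop (max M' 1)] with x hx1 hx2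
  have hxM : M' ≤ x := le_trans (le_max_left _ _) hx2
  have hx0 : (0:ℝ) < x := lt_of_lt_of_le one_pos (le_trans (le_max_right _ _) hx2)
  have hsplit : (∫ t in (0:ℝ)..x, F t)
      = (∫ t in (0:ℝ)..M', F t) + ∫ t in M'..x, F t :=
    (intervalIntegral.integral_add_adjacent_intervals (hint 0 M') (hint M' x)).symm
  have hnn : 0 ≤ ∫ t in (0:ℝ)..M', F t :=
    intervalIntegral.integral_nonneg hM'0 (fun t _ => h0 t)
  have hlow : (x - M') * (1 - ε/2) ≤ ∫ t in M'..x, F t := by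
    have := intervalIntegral.integral_mono_on hxM (intervalIntegrable_const) (hint M' x)
      (fun t ht => (hM t (le_trans (le_max_left _ _) ht.1)).le)
    rwa [intervalIntegral.integral_const, smul_eq_mul] at this
  have hup : (∫ t in (0:ℝ)..x, F t) ≤ x := by
    have := intervalIntegral.integral_mono_on hx0.le (hint 0 x)
      (intervalIntegrable_const (c := (1:ℝ))) (fun t _ => h1 t)
    simpa using this
  have hA : 1 - ε < (∫ t in (0:ℝ)..x, F t) / x := by
    refine lt_of_lt_of_le hx1 ((div_le_div_iff_of_pos_right hx0).mpr ?_)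
    linarith
  have hB : (∫ t in (0:ℝ)..x, F t) / x ≤ 1 := (div_le_one hx0).mpr hup
  rw [Real.dist_eq, abs_lt]
  constructor <;> linarith

lemma aux_bot (F : ℝ → ℝ) (hmono : Monotone F) (h0 : ∀ t, 0 ≤ F t) (h1 : ∀ t, F t ≤ 1)
    (hbot : Tendsto F atBot (nhds 0)) :
    Tendsto (fun x => (∫ t in (0:ℝ)..x, F t) / x) atBot (nhds 0) := by
  have hint : ∀ a b : ℝ, IntervalIntegrable F volume a b := fun a b => hmono.intervalIntegrable
  rw [Metric.tendsto_nhds]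
  intro ε hε
  obtain ⟨M, hM⟩ : ∃ M : ℝ, ∀ t ≤ M, F t < ε/2 := by
    have := hbot.eventually (eventually_lt_nhds (show (0:ℝ) < ε/2 by linarith))
    exact eventually_atBot.1 this
  set M' := min M 0 with hM'def
  have hM'0 : M' ≤ 0 := min_le_right _ _
  have hinv : Tendsto (fun x : ℝ => x⁻¹) atBot (nhds (0:ℝ)) := by
    have h3 := (tendsto_inv_atTop_zero (𝕜 := ℝ)).comp tendsto_neg_atBot_atTop
    have h4 := h3.neg
    rw [neg_zero] at h4
    exact h4.congr fun x => by simp [Function.comp, inv_neg]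
  have hlim : Tendsto (fun x : ℝ => ((M' - x) * (ε/2) - M') / (-x)) atBot (nhds (ε/2)) := by
    have h2 : Tendsto (fun x : ℝ => (ε/2) - (M' * (ε/2) - M') * x⁻¹) atBot
        (nhds ((ε/2) - (M' * (ε/2) - M') * 0)) :=
      tendsto_const_nhds.sub (hinv.const_mul _)
    rw [mul_zero, sub_zero] at h2
    refine h2.congr' ?_
    filter_upwards [eventually_lt_atBot (0:ℝ)] with x hx
    have hxne : x ≠ 0 := hx.ne
    field_simp
    ring
  have hev : ∀ᶠ x : ℝ in atBot, ((M' - x) * (ε/2) - M') / (-x) < ε :=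
    hlim.eventually (eventually_lt_nhds (by linarith))
  filter_upwards [hev, eventually_le_atBot (min M' (-1))] with x hx1 hx2
  have hxM : x ≤ M' := le_trans hx2 (min_le_left _ _)
  have hx0 : x < 0 := lt_of_le_of_lt (le_trans hx2 (min_le_right _ _)) (by norm_num)
  have hsplit : (∫ t in x..(0:ℝ), F t) = (∫ t in x..M', F t) + ∫ t in M'..(0:ℝ), F t :=
    (intervalIntegral.integral_add_adjacent_intervals (hint x M') (hint M' 0)).symm
  have hnn : 0 ≤ ∫ t in x..(0:ℝ), F t :=
    intervalIntegral.integral_nonneg hx0.le (fun t _ => h0 t)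
  have hb1 : (∫ t in x..M', F t) ≤ (M' - x) * (ε/2) := by
    have := intervalIntegral.integral_mono_on hxM (hint x M') intervalIntegrable_const
      (fun t ht => (hM t (le_trans ht.2 (min_le_left _ _))).le)
    rwa [intervalIntegral.integral_const, smul_eq_mul] at this
  have hb2 : (∫ t in M'..(0:ℝ), F t) ≤ -M' := by
    have := intervalIntegral.integral_mono_on hM'0 (hint M' 0)
      (intervalIntegrable_const (c := (1:ℝ))) (fun t _ => h1 t)
    rw [intervalIntegral.integral_const, smul_eq_mul] at this
    linarith
  have hq : (∫ t in (0:ℝ)..x, F t) / x = (∫ t in x..(0:ℝ), F t) / (-x) := by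
    rw [intervalIntegral.integral_symm x 0, neg_div, div_neg]
  have hxpos : (0:ℝ) < -x := by linarith
  rw [Real.dist_eq, sub_zero, abs_lt]
  constructor
  · rw [hq]
    have : 0 ≤ (∫ t in x..(0:ℝ), F t) / (-x) := div_nonneg hnn hxpos.le
    linarith
  · rw [hq]
    refine lt_of_le_of_lt ((div_le_div_iff_of_pos_right hxpos).mpr ?_) hx1
    linarith

theorem stmt4 {Ω : Type*} [MeasurableSpace Ω] (P : Measure Ω) [IsProbabilityMeasure P]
    (X : Ω → ℝ) (hX : Measurable X) :
    Tendsto (fun x : ℝ => idf P X x / x) atBot (nhds 0) ∧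
    Tendsto (fun x : ℝ => idf P X x / x) atTop (nhds 1) := by
  have hprob : IsProbabilityMeasure (P.map X) := Measure.isProbabilityMeasure_map hX.aemeasurable
  have key : cdf P X = fun x => ProbabilityTheory.cdf (P.map X) x := by
    funext x
    rw [ProbabilityTheory.cdf_eq_real, measureReal_def, Measure.map_apply hX measurableSet_Iic]
    rfl
  have hid : ∀ x, idf P X x = ∫ t in (0:ℝ)..x, ProbabilityTheory.cdf (P.map X) t := by
    intro x; simp only [idf, key]
  have hmono : Monotone (fun t => ProbabilityTheory.cdf (P.map X) t) :=
    ProbabilityTheory.monotone_cdf (P.map X)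
  constructor
  · exact (aux_bot _ hmono (ProbabilityTheory.cdf_nonneg _) (ProbabilityTheory.cdf_le_one _)
      (ProbabilityTheory.tendsto_cdf_atBot _)).congr (fun x => by rw [hid])
  · exact (aux_top _ hmono (ProbabilityTheory.cdf_nonneg _) (ProbabilityTheory.cdf_le_one _)
      (ProbabilityTheory.tendsto_cdf_atTop _)).congr (fun x => by rw [hid])
end

section
/- For a real random variable X, the subdifferential of the convex function idf_X at any point x ∈ ℝ equals the interval [F_X(x−0), F_X(x)], where F_X(x−0) denotes the left limit of F_X at x; in particular, the left derivative of idf_X at x is F_X(x−0) and the right derivative is F_X(x). -/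
open MeasureTheory Filter Set Topology

lemma cdf_eq_stieltjes {Ω : Type*} [MeasurableSpace Ω] (P : Measure Ω) [IsProbabilityMeasure P]
    (X : Ω → ℝ) (hX : Measurable X) :
    cdf P X = fun y => ProbabilityTheory.cdf (P.map X) y := by
  have : IsProbabilityMeasure (P.map X) := Measure.isProbabilityMeasure_map hX.aemeasurable
  funext y
  rw [ProbabilityTheory.cdf_eq_real, measureReal_def, Measure.map_apply hX measurableSet_Iic]
  rfl

theorem stmt5 {Ω : Type*} [MeasurableSpace Ω] (P : Measure Ω) [IsProbabilityMeasure P]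
    (X : Ω → ℝ) (hX : Measurable X) (x : ℝ) :
    {u : ℝ | ∀ y : ℝ, idf P X x + u * (y - x) ≤ idf P X y}
      = Set.Icc (Function.leftLim (cdf P X) x) (cdf P X x) ∧
    HasDerivWithinAt (idf P X) (Function.leftLim (cdf P X) x) (Set.Iio x) x ∧
    HasDerivWithinAt (idf P X) (cdf P X x) (Set.Ioi x) x := by
  have : IsProbabilityMeasure (P.map X) := Measure.isProbabilityMeasure_map hX.aemeasurable
  set f : ℝ → ℝ := cdf P X with hf
  have hst : f = fun y => ProbabilityTheory.cdf (P.map X) y := cdf_eq_stieltjes P X hX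
  have hmono : Monotone f := by rw [hst]; exact (ProbabilityTheory.cdf (P.map X)).mono
  have hrc : ContinuousWithinAt f (Ici x) x := by
    rw [hst]; exact (ProbabilityTheory.cdf (P.map X)).right_continuous x
  set L : ℝ := Function.leftLim f x with hL
  have hInt : ∀ a b : ℝ, IntervalIntegrable f volume a b := fun a b =>
    hmono.intervalIntegrable
  have hmeasf : StronglyMeasurable f := (hmono.measurable).stronglyMeasurable
  have hseg : ∀ y : ℝ, idf P X y - idf P X x = ∫ t in x..y, f t := by
    intro y
    have := intervalIntegral.integral_add_adjacent_intervals (hInt 0 x) (hInt x y)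
    simp only [idf]
    linarith [this]
  -- bounds on segments
  have hub : ∀ {a b : ℝ}, a ≤ b → (∫ t in a..b, f t) ≤ (b - a) * f b := by
    intro a b hab
    have := intervalIntegral.integral_mono_on hab (hInt a b)
      (intervalIntegrable_const) (fun t ht => hmono ht.2)
    simpa [intervalIntegral.integral_const, smul_eq_mul] using this
  have hlb : ∀ {a b : ℝ}, a ≤ b → (b - a) * f a ≤ ∫ t in a..b, f t := by
    intro a b hab
    have := intervalIntegral.integral_mono_on hab (intervalIntegrable_const) (hInt a b)
      (fun t ht => hmono ht.1)
    simpa [intervalIntegral.integral_const, smul_eq_mul] using this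
  have hubL : ∀ {a : ℝ}, a ≤ x → (∫ t in a..x, f t) ≤ (x - a) * L := by
    intro a hax
    have hae : f ≤ᵐ[volume.restrict (Icc a x)] fun _ => L := by
      have hx0 : ∀ᵐ t : ℝ, t ≠ x := by
        rw [ae_iff]
        simpa using measure_singleton x
      filter_upwards [ae_restrict_of_ae hx0,
        ae_restrict_mem measurableSet_Icc] with t ht ht2
      exact hmono.le_leftLim (lt_of_le_of_ne ht2.2 ht)
    have := intervalIntegral.integral_mono_ae_restrict hax (hInt a x)
      (intervalIntegrable_const) hae
    simpa [intervalIntegral.integral_const, smul_eq_mul] using this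
  have htendL : Tendsto f (𝓝[<] x) (𝓝 L) := hmono.tendsto_leftLim x
  -- derivatives
  have hDright : HasDerivWithinAt (idf P X) (f x) (Set.Ioi x) x := by
    have : HasDerivWithinAt (fun u => ∫ t in (0:ℝ)..u, f t) (f x) (Ici x) x :=
      intervalIntegral.integral_hasDerivWithinAt_right (hInt 0 x)
        ⟨univ, univ_mem, hmeasf.aestronglyMeasurable⟩
        (hrc.mono Ioi_subset_Ici_self)
    exact (this.mono Ioi_subset_Ici_self)
  have hDleft : HasDerivWithinAt (idf P X) L (Set.Iio x) x := by
    have hle : 𝓝[Iic x] x ⊓ ae volume ≤ 𝓝[<] x := by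
      calc 𝓝[Iic x] x ⊓ ae volume ≤ 𝓝[Iic x] x ⊓ 𝓟 {x}ᶜ :=
            inf_le_inf_left _ (le_principal_iff.mpr
              (compl_mem_ae_iff.2 (measure_singleton x)))
        _ = 𝓝[Iio x] x := by
            rw [← nhdsWithin_inter']
            congr 1
            ext t
            simp [lt_iff_le_and_ne]
    have : HasDerivWithinAt (fun u => ∫ t in (0:ℝ)..u, f t) L (Iic x) x :=
      intervalIntegral.integral_hasDerivWithinAt_of_tendsto_ae_right (hInt 0 x)
        (t := Iic x)
        ⟨univ, univ_mem, hmeasf.aestronglyMeasurable⟩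
        (htendL.mono_left hle)
    exact (this.mono Iio_subset_Iic_self)
  refine ⟨?_, hDleft, hDright⟩
  ext u
  simp only [Set.mem_setOf_eq, Set.mem_Icc]
  constructor
  · intro hu
    constructor
    · -- L ≤ u
      refine le_of_tendsto htendL ?_
      filter_upwards [self_mem_nhdsWithin] with y (hy : y < x)
      have h1 := hu y
      have h2 : idf P X y - idf P X x = -∫ t in y..x, f t := by
        rw [hseg y, intervalIntegral.integral_symm]
      have h3 := hlb hy.le
      nlinarith
    · -- u ≤ f x
      have hx : Tendsto f (𝓝[>] x) (𝓝 (f x)) :=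
        hrc.tendsto.mono_left (nhdsWithin_mono x Ioi_subset_Ici_self)
      refine ge_of_tendsto hx ?_
      filter_upwards [self_mem_nhdsWithin] with y (hy : x < y)
      have h1 := hu y
      have h2 := hseg y
      have h3 := hub hy.le
      nlinarith
  · rintro ⟨h1, h2⟩ y
    rcases le_or_gt x y with hxy | hxy
    · have h3 := hlb hxy
      have h4 := hseg y
      nlinarith
    · have h3 := hubL hxy.le
      have h4 : idf P X y - idf P X x = -∫ t in y..x, f t := by
        rw [hseg y, intervalIntegral.integral_symm]
      nlinarith
end

section
/- Let J : ℝ → ℝ be a convex function with J(0) = 0, lim_{x→−∞} J(x)/x = 0 and lim_{x→+∞} J(x)/x = 1. Then there exists a real random variable X (on some probability space) whose integrated distribution function idf_X equals J; indeed, the right derivative of J is a distribution function. -/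
open MeasureTheory Filter Set Topology

theorem stmt7 (J : ℝ → ℝ) (hconv : ConvexOn ℝ Set.univ J) (h0 : J 0 = 0)
    (hbot : Tendsto (fun x : ℝ => J x / x) atBot (nhds 0))
    (htop : Tendsto (fun x : ℝ => J x / x) atTop (nhds 1)) :
    ∃ (P : Measure ℝ), IsProbabilityMeasure P ∧
      (∀ x : ℝ, idf P id x = J x) ∧
      (∀ x : ℝ, HasDerivWithinAt J (cdf P id x) (Set.Ioi x) x) := by
  -- continuity of J
  have hJcont : Continuous J := by
    rw [← continuousOn_univ]
    exact hconv.continuousOn isOpen_univ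
  have hslope : ∀ a b : ℝ, slope J a b = (J b - J a) / (b - a) := fun a b => slope_def_field J a b
  -- monotonicity of slopes in the second variable
  have hmono : ∀ a : ℝ, ∀ {u v : ℝ}, u ≠ a → v ≠ a → u ≤ v → slope J a u ≤ slope J a v := by
    intro a u v hu hv huv
    rw [hslope, hslope]
    exact hconv.secant_mono (mem_univ a) (mem_univ u) (mem_univ v) hu hv huv
  -- slope tends to 1 at +∞ (in second variable)
  have hslope_top : ∀ x : ℝ, Tendsto (fun z => slope J x z) atTop (𝓝 1) := by
    intro x
    have h1 : Tendsto (fun z : ℝ => z - x) atTop atTop := tendsto_atTop_add_const_right _ _ tendsto_id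
    have h2 : Tendsto (fun z : ℝ => (z - x)⁻¹) atTop (𝓝 0) := tendsto_inv_atTop_zero.comp h1
    have key : Tendsto (fun z : ℝ => (J z / z) * (1 + x * (z - x)⁻¹) - J x * (z - x)⁻¹) atTop
        (𝓝 (1 * (1 + x * 0) - J x * 0)) :=
      (htop.mul ((tendsto_const_nhds.mul h2).const_add 1)).sub (h2.const_mul _)
    have heq : (1 : ℝ) * (1 + x * 0) - J x * 0 = 1 := by ring
    rw [heq] at key
    refine key.congr' ?_
    filter_upwards [eventually_gt_atTop (max x 0)] with z hz
    have hzx : z - x ≠ 0 := by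
      have := lt_of_le_of_lt (le_max_left x 0) hz; intro h; linarith
    have hz0 : z ≠ 0 := ne_of_gt (lt_of_le_of_lt (le_max_right x 0) hz)
    rw [hslope]
    field_simp
    ring
  -- slope tends to 0 at -∞
  have hslope_bot : ∀ x : ℝ, Tendsto (fun w => slope J x w) atBot (𝓝 0) := by
    intro x
    have h1 : Tendsto (fun w : ℝ => x - w) atBot atTop := by
      exact (tendsto_atTop_add_const_left atBot x tendsto_neg_atBot_atTop).congr (fun w => (sub_eq_add_neg x w).symm)
    have h2 : Tendsto (fun w : ℝ => (x - w)⁻¹) atBot (𝓝 0) := tendsto_inv_atTop_zero.comp h1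
    have key : Tendsto (fun w : ℝ => J x * (x - w)⁻¹ - (J w / w) * (-1 + x * (x - w)⁻¹)) atBot
        (𝓝 (J x * 0 - 0 * (-1 + x * 0))) :=
      (h2.const_mul _).sub (hbot.mul ((tendsto_const_nhds.mul h2).const_add (-1)))
    have heq : J x * 0 - (0:ℝ) * (-1 + x * 0) = 0 := by ring
    rw [heq] at key
    refine key.congr' ?_
    filter_upwards [eventually_lt_atBot (min x 0)] with w hw
    have hwx : x - w ≠ 0 := by
      have := lt_of_lt_of_le hw (min_le_left x 0); intro h; linarith
    have hw0 : w ≠ 0 := ne_of_lt (lt_of_lt_of_le hw (min_le_right x 0))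
    have hwx' : w - x ≠ 0 := by intro h; apply hwx; linarith
    rw [hslope]
    field_simp
    ring
  -- slopes are between 0 and 1
  have hslope_nonneg : ∀ x z : ℝ, z ≠ x → 0 ≤ slope J x z := by
    intro x z hz
    refine le_of_tendsto (hslope_bot x) ?_
    filter_upwards [eventually_lt_atBot (min z x)] with w hw
    have hw1 : w ≠ x := ne_of_lt (lt_of_lt_of_le hw (min_le_right z x))
    exact hmono x hw1 hz (le_of_lt (lt_of_lt_of_le hw (min_le_left z x)))
  have hslope_le_one : ∀ x z : ℝ, z ≠ x → slope J x z ≤ 1 := by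
    intro x z hz
    refine ge_of_tendsto (hslope_top x) ?_
    filter_upwards [eventually_gt_atTop (max z x)] with w hw
    have hw1 : w ≠ x := ne_of_gt (lt_of_le_of_lt (le_max_right z x) hw)
    exact hmono x hz hw1 (le_of_lt (lt_of_le_of_lt (le_max_left z x) hw))
  -- the right derivative
  set F : ℝ → ℝ := fun x => sInf (slope J x '' Ioi x) with hF
  have hbdd : ∀ x : ℝ, BddBelow (slope J x '' Ioi x) := by
    intro x
    refine ⟨0, fun y hy => ?_⟩
    obtain ⟨z, hz, rfl⟩ := hy
    exact hslope_nonneg x z (ne_of_gt hz)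
  have hne : ∀ x : ℝ, (slope J x '' Ioi x).Nonempty :=
    fun x => ⟨slope J x (x+1), ⟨x+1, by simp, rfl⟩⟩
  have hF_le_slope : ∀ x z : ℝ, x < z → F x ≤ slope J x z :=
    fun x z hz => csInf_le (hbdd x) ⟨z, hz, rfl⟩
  have hslope_le_F : ∀ x w : ℝ, w < x → slope J x w ≤ F x := by
    intro x w hw
    refine le_csInf (hne x) ?_
    rintro y ⟨z, hz, rfl⟩
    exact hmono x (ne_of_lt hw) (ne_of_gt hz) (le_of_lt (hw.trans hz))
  have hF_nonneg : ∀ x : ℝ, 0 ≤ F x := by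
    intro x
    refine le_csInf (hne x) ?_
    rintro y ⟨z, hz, rfl⟩
    exact hslope_nonneg x z (ne_of_gt hz)
  have hF_le_one : ∀ x : ℝ, F x ≤ 1 :=
    fun x => (hF_le_slope x (x+1) (by linarith)).trans (hslope_le_one x (x+1) (by intro h; linarith [h ▸ lt_add_one x]))
  -- right differentiability
  have hderiv : ∀ x : ℝ, HasDerivWithinAt J (F x) (Ioi x) x := by
    intro x
    rw [hasDerivWithinAt_iff_tendsto_slope' (notMem_Ioi_self)]
    exact MonotoneOn.tendsto_nhdsGT
      (fun u hu v hv huv => hmono x (ne_of_gt hu) (ne_of_gt hv) huv) (hbdd x)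
  -- monotonicity of F
  have hF_mono : Monotone F := by
    intro x y hxy
    rcases eq_or_lt_of_le hxy with rfl | hxy
    · exact le_rfl
    refine le_csInf (hne y) ?_
    rintro v ⟨z, hz, rfl⟩
    calc F x ≤ slope J x y := hF_le_slope x y hxy
    _ ≤ slope J y z := by
      rw [hslope, hslope]
      exact hconv.slope_mono_adjacent (mem_univ x) (mem_univ z) hxy hz
  -- right continuity of F
  have hF_rc : ∀ x : ℝ, ContinuousWithinAt F (Ici x) x := by
    intro x
    rw [← continuousWithinAt_Ioi_iff_Ici, hF_mono.continuousWithinAt_Ioi_iff_rightLim_eq,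
      hF_mono.rightLim_eq_sInf]
    have hFbdd : BddBelow (F '' Ioi x) := ⟨0, by rintro v ⟨z, _, rfl⟩; exact hF_nonneg z⟩
    refine le_antisymm ?_ (le_csInf (nonempty_Ioi.image F)
      (by rintro v ⟨z, hz, rfl⟩; exact hF_mono (le_of_lt hz)))
    refine le_csInf (hne x) ?_
    rintro v ⟨z, hz, rfl⟩
    -- sInf (F '' Ioi x) ≤ slope J x z
    have hcont : Tendsto (fun y => slope J z y) (𝓝[>] x) (𝓝 (slope J z x)) := by
      simp only [hslope]
      exact ((hJcont.continuousAt.sub continuousAt_const).div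
        ((continuous_id.continuousAt).sub continuousAt_const)
        (sub_ne_zero.mpr (ne_of_lt hz))).continuousWithinAt
    rw [← slope_comm]
    refine ge_of_tendsto hcont ?_
    filter_upwards [Ioo_mem_nhdsGT_of_mem ⟨le_rfl, hz⟩] with y hy
    calc sInf (F '' Ioi x) ≤ F y := csInf_le hFbdd ⟨y, hy.1, rfl⟩
    _ ≤ slope J y z := hF_le_slope y z hy.2
    _ = slope J z y := slope_comm J y z
  -- limits of F
  have hF_top : Tendsto F atTop (𝓝 1) := by
    refine tendsto_of_tendsto_of_tendsto_of_le_of_le' htop tendsto_const_nhds ?_ ?_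
    · filter_upwards [eventually_gt_atTop (0:ℝ)] with x hx
      have : slope J x 0 ≤ F x := hslope_le_F x 0 hx
      rw [hslope] at this
      rw [h0] at this
      have heq : J x / x = (0 - J x) / (0 - x) := by
        rw [zero_sub, zero_sub, neg_div_neg_eq]
      rw [heq]; exact this
    · exact Eventually.of_forall hF_le_one
  have hF_bot : Tendsto F atBot (𝓝 0) := by
    refine tendsto_of_tendsto_of_tendsto_of_le_of_le' tendsto_const_nhds hbot
      (Eventually.of_forall hF_nonneg) ?_
    filter_upwards [eventually_lt_atBot (0:ℝ)] with x hx
    have : F x ≤ slope J x 0 := hF_le_slope x 0 hx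
    rw [hslope, h0] at this
    have heq : (0 - J x) / (0 - x) = J x / x := by
      rw [zero_sub, zero_sub, neg_div_neg_eq]
    rw [← heq]; exact this
  -- the Stieltjes measure
  set S : StieltjesFunction ℝ := ⟨F, hF_mono, hF_rc⟩ with hS
  refine ⟨S.measure, S.isProbabilityMeasure hF_bot hF_top, ?_, ?_⟩
  · -- idf equals J
    have hcdf : ∀ t : ℝ, cdf S.measure id t = F t := by
      intro t
      have : {ω : ℝ | id ω ≤ t} = Iic t := rfl
      rw [cdf, this, S.measure_Iic hF_bot t]
      rw [sub_zero]; exact ENNReal.toReal_ofReal (hF_nonneg t)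
    intro x
    have hint : ∀ a b : ℝ, IntervalIntegrable F volume a b :=
      fun a b => (hF_mono.monotoneOn _).intervalIntegrable
    have hstep : ∀ a b : ℝ, a ≤ b → ∫ t in a..b, F t = J b - J a := by
      intro a b hab
      exact intervalIntegral.integral_eq_sub_of_hasDeriv_right_of_le hab
        (hJcont.continuousOn) (fun t _ => hderiv t) (hint a b)
    have hIeq : idf S.measure id x = ∫ t in (0:ℝ)..x, F t := by
      rw [idf]
      exact intervalIntegral.integral_congr (fun t _ => hcdf t)
    rcases le_total 0 x with hx | hx
    · rw [hIeq, hstep 0 x hx, h0, sub_zero]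
    · rw [hIeq, intervalIntegral.integral_symm, hstep x 0 hx, h0, zero_sub, neg_neg]
  · intro x
    have hcdf : cdf S.measure id x = F x := by
      have : {ω : ℝ | id ω ≤ x} = Iic x := rfl
      rw [cdf, this, S.measure_Iic hF_bot x]
      rw [sub_zero]; exact ENNReal.toReal_ofReal (hF_nonneg x)
    rw [hcdf]
    exact hderiv x
end

section
/- Let X be a real random variable and define iqf_X(u) := sup_{x ∈ ℝ}(xu − idf_X(x)). Then iqf_X is a convex, lower semicontinuous function, finite on (0,1), equal to +∞ outside [0,1], and its Fenchel transform is idf_X, i.e. idf_X(x) = sup_{u ∈ ℝ}(xu − iqf_X(u)) for every x ∈ ℝ. -/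
open MeasureTheory Filter Set

open Topology
section Helpers

variable {Ω : Type*} [MeasurableSpace Ω] (P : Measure Ω) [IsProbabilityMeasure P] (X : Ω → ℝ)

lemma my_cdf_mono : Monotone (cdf P X) := by
  intro x y hxy
  exact ENNReal.toReal_mono (measure_ne_top P _)
    (measure_mono fun ω (hω : X ω ≤ x) => hω.trans hxy)

lemma my_cdf_nonneg (x : ℝ) : 0 ≤ cdf P X x := ENNReal.toReal_nonneg

lemma my_cdf_le_one (x : ℝ) : cdf P X x ≤ 1 := by
  have := prob_le_one (μ := P) (s := {ω | X ω ≤ x})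
  simpa [cdf] using ENNReal.toReal_mono ENNReal.one_ne_top this

lemma my_intInt (a b : ℝ) : IntervalIntegrable (cdf P X) volume a b :=
  (my_cdf_mono P X).intervalIntegrable

lemma my_idf_sub (x y : ℝ) : idf P X y - idf P X x = ∫ t in x..y, cdf P X t := by
  unfold idf
  exact intervalIntegral.integral_interval_sub_left (my_intInt P X 0 y) (my_intInt P X 0 x)

lemma my_subgrad (x y : ℝ) : (y - x) * cdf P X x ≤ idf P X y - idf P X x := by
  rw [my_idf_sub]
  rcases le_total x y with h | h
  · have h1 : (∫ _ in x..y, cdf P X x) ≤ ∫ t in x..y, cdf P X t := by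
      refine intervalIntegral.integral_mono_on h intervalIntegrable_const (my_intInt P X x y) ?_
      intro t ht
      exact my_cdf_mono P X ht.1
    simpa [smul_eq_mul, mul_comm] using h1
  · have h1 : (∫ t in y..x, cdf P X t) ≤ ∫ _ in y..x, cdf P X x := by
      refine intervalIntegral.integral_mono_on h (my_intInt P X y x) intervalIntegrable_const ?_
      intro t ht
      exact my_cdf_mono P X ht.2
    rw [intervalIntegral.integral_symm y x]
    simp only [intervalIntegral.integral_const, smul_eq_mul] at h1 ⊢
    nlinarith [h1]

lemma my_idf_zero : idf P X 0 = 0 := intervalIntegral.integral_same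

lemma my_idf_mono : Monotone (idf P X) := by
  intro x y hxy
  have h := my_subgrad P X x y
  nlinarith [my_cdf_nonneg P X x, h, sub_nonneg.2 hxy, mul_nonneg (sub_nonneg.2 hxy) (my_cdf_nonneg P X x)]

lemma my_idf_le_self {x : ℝ} (hx : 0 ≤ x) : idf P X x ≤ x := by
  unfold idf
  have h1 : (∫ t in (0:ℝ)..x, cdf P X t) ≤ ∫ _ in (0:ℝ)..x, (1:ℝ) := by
    refine intervalIntegral.integral_mono_on hx (my_intInt P X 0 x) intervalIntegrable_const ?_
    intro t _
    exact my_cdf_le_one P X t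
  simpa using h1

lemma my_idf_nonpos {x : ℝ} (hx : x ≤ 0) : idf P X x ≤ 0 := by
  have := my_idf_mono P X hx
  rw [my_idf_zero] at this
  exact this

lemma my_iqf_ge (u x : ℝ) : ((x * u - idf P X x : ℝ) : EReal) ≤ iqf P X u :=
  le_iSup (fun x : ℝ => ((x * u - idf P X x : ℝ) : EReal)) x

lemma my_iqf_nonneg (u : ℝ) : (0 : EReal) ≤ iqf P X u := by
  have h := my_iqf_ge P X u 0
  rw [my_idf_zero] at h
  simpa using h

lemma my_iqf_ne_bot (u : ℝ) : iqf P X u ≠ ⊥ :=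
  fun h => by simpa [h] using my_iqf_nonneg P X u

lemma my_iqf_cdf (x : ℝ) :
    iqf P X (cdf P X x) = ((x * cdf P X x - idf P X x : ℝ) : EReal) := by
  refine le_antisymm (iSup_le fun y => ?_) (my_iqf_ge P X _ x)
  rw [EReal.coe_le_coe_iff]
  have h := my_subgrad P X x y
  nlinarith [h]

lemma my_cdf_eq (hX : Measurable X) : cdf P X = ProbabilityTheory.cdf (P.map X) := by
  haveI : IsProbabilityMeasure (P.map X) := Measure.isProbabilityMeasure_map hX.aemeasurable
  funext x
  rw [ProbabilityTheory.cdf_eq_real, Measure.real, Measure.map_apply hX measurableSet_Iic]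
  rfl

lemma my_cdf_tendsto_atTop (hX : Measurable X) : Tendsto (cdf P X) atTop (𝓝 1) := by
  rw [my_cdf_eq P X hX]
  exact ProbabilityTheory.tendsto_cdf_atTop (P.map X)

lemma my_cdf_tendsto_atBot (hX : Measurable X) : Tendsto (cdf P X) atBot (𝓝 0) := by
  rw [my_cdf_eq P X hX]
  exact ProbabilityTheory.tendsto_cdf_atBot (P.map X)

end Helpers

theorem stmt8 {Ω : Type*} [MeasurableSpace Ω] (P : Measure Ω) [IsProbabilityMeasure P]
    (X : Ω → ℝ) (hX : Measurable X) :
    (∀ u v a b : ℝ, 0 ≤ a → 0 ≤ b → a + b = 1 →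
      iqf P X (a * u + b * v) ≤ ((a : ℝ) : EReal) * iqf P X u + ((b : ℝ) : EReal) * iqf P X v) ∧
    LowerSemicontinuous (iqf P X) ∧
    (∀ u ∈ Set.Ioo (0:ℝ) 1, iqf P X u ≠ ⊤ ∧ iqf P X u ≠ ⊥) ∧
    (∀ u : ℝ, u ∉ Set.Icc (0:ℝ) 1 → iqf P X u = ⊤) ∧
    (∀ x : ℝ, ((idf P X x : ℝ) : EReal) = ⨆ u : ℝ, (((x * u : ℝ) : EReal) - iqf P X u)) := by
  refine ⟨?_, ?_, ?_, ?_, ?_⟩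
  · -- convexity
    intro u v a b ha hb hab
    rcases ha.eq_or_lt with rfl | ha'
    · have hb1 : b = 1 := by linarith
      subst hb1
      simp [EReal.zero_mul, EReal.one_mul]
    rcases hb.eq_or_lt with rfl | hb'
    · have ha1 : a = 1 := by linarith
      subst ha1
      simp [EReal.zero_mul, EReal.one_mul]
    by_cases hu : iqf P X u = ⊤
    · rw [hu, EReal.coe_mul_top_of_pos ha',
        EReal.top_add_of_ne_bot]
      · exact le_top
      · rcases eq_or_ne (iqf P X v) ⊤ with hv | hv
        · rw [hv, EReal.coe_mul_top_of_pos hb']; exact top_ne_bot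
        · rw [← EReal.coe_toReal hv (my_iqf_ne_bot P X v), ← EReal.coe_mul]
          exact EReal.coe_ne_bot _
    by_cases hv : iqf P X v = ⊤
    · rw [hv, EReal.coe_mul_top_of_pos hb', EReal.add_top_of_ne_bot]
      · exact le_top
      · rw [← EReal.coe_toReal hu (my_iqf_ne_bot P X u), ← EReal.coe_mul]
        exact EReal.coe_ne_bot _
    set r := (iqf P X u).toReal with hr
    set s := (iqf P X v).toReal with hs
    have hru : iqf P X u = (r : EReal) := (EReal.coe_toReal hu (my_iqf_ne_bot P X u)).symm
    have hrv : iqf P X v = (s : EReal) := (EReal.coe_toReal hv (my_iqf_ne_bot P X v)).symm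
    rw [hru, hrv, ← EReal.coe_mul, ← EReal.coe_mul, ← EReal.coe_add]
    refine iSup_le fun x => ?_
    rw [EReal.coe_le_coe_iff]
    have h1 : x * u - idf P X x ≤ r := by
      have := my_iqf_ge P X u x
      rw [hru, EReal.coe_le_coe_iff] at this
      exact this
    have h2 : x * v - idf P X x ≤ s := by
      have := my_iqf_ge P X v x
      rw [hrv, EReal.coe_le_coe_iff] at this
      exact this
    have e1 := mul_le_mul_of_nonneg_left h1 ha
    have e2 := mul_le_mul_of_nonneg_left h2 hb
    have key : x * (a * u + b * v) - idf P X x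
        = a * (x * u - idf P X x) + b * (x * v - idf P X x) := by
      linear_combination (idf P X x) * hab
    linarith [key, e1, e2]
  · -- lower semicontinuity
    unfold iqf
    apply lowerSemicontinuous_iSup
    intro x
    exact (continuous_coe_real_ereal.comp (by fun_prop)).lowerSemicontinuous
  · -- finite on (0,1)
    intro u hu
    obtain ⟨hu0, hu1⟩ := hu
    refine ⟨?_, my_iqf_ne_bot P X u⟩
    -- choose M ≥ 0 with u < cdf M
    have hM : ∃ M : ℝ, 0 ≤ M ∧ u < cdf P X M := by
      have h1 : ∀ᶠ x in atTop, u < cdf P X x :=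
        (my_cdf_tendsto_atTop P X hX).eventually (eventually_gt_nhds hu1)
      obtain ⟨M, hM1, hM2⟩ := (h1.and (eventually_ge_atTop (0:ℝ))).exists
      exact ⟨M, hM2, hM1⟩
    have hN : ∃ N : ℝ, N ≤ 0 ∧ cdf P X N < u := by
      have h1 : ∀ᶠ x in atBot, cdf P X x < u :=
        (my_cdf_tendsto_atBot P X hX).eventually (eventually_lt_nhds hu0)
      obtain ⟨N, hN1, hN2⟩ := (h1.and (eventually_le_atBot (0:ℝ))).exists
      exact ⟨N, hN2, hN1⟩
    obtain ⟨M, hM0, hFM⟩ := hM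
    obtain ⟨N, hN0, hFN⟩ := hN
    set C := max (max (M * u - idf P X M) (N * u - idf P X N))
        ((|N| + |M|) - idf P X N) with hC
    have hle : iqf P X u ≤ (C : EReal) := by
      refine iSup_le fun x => ?_
      rw [EReal.coe_le_coe_iff]
      rcases le_total x N with hxN | hNx
      · have e1 : (x - N) * u ≤ (x - N) * cdf P X N :=
          mul_le_mul_of_nonpos_left hFN.le (by linarith)
        have e2 := my_subgrad P X N x
        have : x * u - idf P X x ≤ N * u - idf P X N := by nlinarith
        exact this.trans ((le_max_right _ _).trans (le_max_left _ _))
      rcases le_total M x with hMx | hxM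
      · have e1 : (x - M) * u ≤ (x - M) * cdf P X M :=
          mul_le_mul_of_nonneg_left hFM.le (by linarith)
        have e2 := my_subgrad P X M x
        have : x * u - idf P X x ≤ M * u - idf P X M := by nlinarith
        exact this.trans ((le_max_left _ _).trans (le_max_left _ _))
      · have hidf : idf P X N ≤ idf P X x := my_idf_mono P X hNx
        have hxu : x * u ≤ |N| + |M| := by
          rcases le_total 0 x with hx0 | hx0
          · have : x * u ≤ x * 1 := mul_le_mul_of_nonneg_left hu1.le hx0
            have h2 : x ≤ |M| := le_trans hxM (le_abs_self M)
            nlinarith [abs_nonneg N]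
          · have : x * u ≤ 0 := mul_nonpos_of_nonpos_of_nonneg hx0 hu0.le
            nlinarith [abs_nonneg N, abs_nonneg M]
        have : x * u - idf P X x ≤ (|N| + |M|) - idf P X N := by linarith
        exact this.trans (le_max_right _ _)
    exact fun h => by simp [h] at hle
  · -- top outside [0,1]
    intro u hu
    rw [Set.mem_Icc, not_and_or, not_le, not_le] at hu
    rw [iqf, iSup_eq_top]
    intro b hb
    obtain ⟨r, hbr, -⟩ := EReal.lt_iff_exists_real_btwn.1 hb
    rcases hu with hu | hu
    · -- u < 0, take x = min 0 ((r+1)/u)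
      set x := min 0 ((r + 1) / u) with hx
      refine ⟨x, lt_of_lt_of_le hbr ?_⟩
      rw [EReal.coe_le_coe_iff]
      have hx0 : x ≤ 0 := min_le_left _ _
      have hxq : x ≤ (r + 1) / u := min_le_right _ _
      have h1 : ((r + 1) / u) * u ≤ x * u := mul_le_mul_of_nonpos_right hxq hu.le
      rw [div_mul_cancel₀ _ hu.ne] at h1
      have h2 : idf P X x ≤ 0 := my_idf_nonpos P X hx0
      linarith
    · -- 1 < u, take x = max 0 ((r+1)/(u-1))
      set x := max 0 ((r + 1) / (u - 1)) with hx
      refine ⟨x, lt_of_lt_of_le hbr ?_⟩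
      rw [EReal.coe_le_coe_iff]
      have hx0 : 0 ≤ x := le_max_left _ _
      have hxq : (r + 1) / (u - 1) ≤ x := le_max_right _ _
      have h1 : ((r + 1) / (u - 1)) * (u - 1) ≤ x * (u - 1) :=
        mul_le_mul_of_nonneg_right hxq (by linarith)
      rw [div_mul_cancel₀ _ (by linarith : u - 1 ≠ 0)] at h1
      have h2 : idf P X x ≤ x := my_idf_le_self P X hx0
      nlinarith
  · -- biconjugate
    intro x
    refine le_antisymm ?_ (iSup_le fun u => ?_)
    · have key : ((idf P X x : ℝ) : EReal)
          = ((x * cdf P X x : ℝ) : EReal) - iqf P X (cdf P X x) := by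
        rw [my_iqf_cdf, ← EReal.coe_sub]
        norm_num
      rw [key]
      exact le_iSup (fun u : ℝ => ((x * u : ℝ) : EReal) - iqf P X u) (cdf P X x)
    · have h := my_iqf_ge P X u x
      calc ((x * u : ℝ) : EReal) - iqf P X u
          ≤ ((x * u : ℝ) : EReal) - ((x * u - idf P X x : ℝ) : EReal) :=
            EReal.sub_le_sub le_rfl h
        _ = ((idf P X x : ℝ) : EReal) := by rw [← EReal.coe_sub]; norm_num
end

section
/- Let X be a real random variable with integrated quantile function iqf_X (the Fenchel transform of idf_X). Then min_{u ∈ ℝ} iqf_X(u) = 0 and the set {u : iqf_X(u) = 0} equals the interval [F_X(0−0), F_X(0)]. -/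
open MeasureTheory Filter Set Topology

theorem stmt9 {Ω : Type*} [MeasurableSpace Ω] (P : Measure Ω) [IsProbabilityMeasure P]
    (X : Ω → ℝ) (hX : Measurable X) :
    (∀ u : ℝ, (0 : EReal) ≤ iqf P X u) ∧
    {u : ℝ | iqf P X u = 0} = Set.Icc (Function.leftLim (cdf P X) 0) (cdf P X 0) := by
  set F := cdf P X with hFdef
  have hmono : Monotone F := fun a b hab =>
    ENNReal.toReal_mono (measure_ne_top P _)
      (measure_mono (fun ω (h : X ω ≤ a) => h.trans hab))
  have hint : ∀ a b : ℝ, IntervalIntegrable F volume a b := fun a b =>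
    hmono.intervalIntegrable
  have hidf0 : idf P X 0 = 0 := intervalIntegral.integral_same
  -- right continuity of F at 0
  have hmap : IsProbabilityMeasure (P.map X) := Measure.isProbabilityMeasure_map hX.aemeasurable
  have hFeq : F = fun x => (ProbabilityTheory.cdf (P.map X)) x := by
    funext x
    rw [ProbabilityTheory.cdf_eq_real, measureReal_def, Measure.map_apply hX measurableSet_Iic]
    rfl
  have hrc : ContinuousWithinAt F (Ici 0) 0 := by
    rw [hFeq]
    exact (ProbabilityTheory.cdf (P.map X)).right_continuous 0
  -- Key lemma A: u in Icc → ∀ x, x*u ≤ idf x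
  have lemA : ∀ u : ℝ, u ∈ Set.Icc (Function.leftLim F 0) (F 0) →
      ∀ x : ℝ, x * u ≤ idf P X x := by
    intro u hu x
    rcases le_or_gt 0 x with hx | hx
    · have h1 : ∫ t in (0:ℝ)..x, F 0 ≤ ∫ t in (0:ℝ)..x, F t :=
        intervalIntegral.integral_mono_on hx (intervalIntegrable_const) (hint 0 x)
          (fun t ht => hmono ht.1)
      rw [intervalIntegral.integral_const, smul_eq_mul, sub_zero] at h1
      calc x * u ≤ x * F 0 := mul_le_mul_of_nonneg_left hu.2 hx
        _ ≤ idf P X x := h1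
    · have hxle : x ≤ 0 := hx.le
      have hae : (fun t => F t) ≤ᵐ[volume.restrict (Set.Icc x 0)] (fun _ => u) := by
        have h0 : ∀ᵐ t ∂(volume.restrict (Set.Icc x 0)), t ≠ 0 :=
          ae_restrict_of_ae (by
            have : (volume : Measure ℝ) {(0:ℝ)} = 0 := measure_singleton 0
            exact (ae_iff.2 (by simp [this])))
        filter_upwards [h0, ae_restrict_mem measurableSet_Icc] with t ht hmem
        have htlt : t < 0 := lt_of_le_of_ne hmem.2 ht
        exact (hmono.le_leftLim htlt).trans hu.1
      have h1 : ∫ t in x..(0:ℝ), F t ≤ ∫ t in x..(0:ℝ), u :=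
        intervalIntegral.integral_mono_ae_restrict hxle (hint x 0) intervalIntegrable_const hae
      rw [intervalIntegral.integral_const, smul_eq_mul, zero_sub] at h1
      have h2 : idf P X x = - ∫ t in x..(0:ℝ), F t := by
        simp only [idf]; exact intervalIntegral.integral_symm x 0
      rw [h2]
      nlinarith
  -- Key lemma B: ∀ x, x*u ≤ idf x → u in Icc
  have lemB : ∀ u : ℝ, (∀ x : ℝ, x * u ≤ idf P X x) →
      u ∈ Set.Icc (Function.leftLim F 0) (F 0) := by
    intro u hu
    constructor
    · -- leftLim F 0 ≤ u
      have key : ∀ x : ℝ, x < 0 → F x ≤ u := by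
        intro x hx
        have h1 : ∫ t in x..(0:ℝ), F x ≤ ∫ t in x..(0:ℝ), F t :=
          intervalIntegral.integral_mono_on hx.le intervalIntegrable_const (hint x 0)
            (fun t ht => hmono ht.1)
        rw [intervalIntegral.integral_const, smul_eq_mul, zero_sub] at h1
        have h2 := hu x
        have h3 : idf P X x = - ∫ t in x..(0:ℝ), F t := by
          simp only [idf]; exact intervalIntegral.integral_symm x 0
        rw [h3] at h2
        nlinarith
      have htend : Tendsto F (𝓝[<] (0:ℝ)) (𝓝 (Function.leftLim F 0)) :=
        hmono.tendsto_leftLim 0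
      exact le_of_tendsto htend (eventually_nhdsWithin_of_forall fun x hx => key x hx)
    · -- u ≤ F 0
      have key : ∀ x : ℝ, 0 < x → u ≤ F x := by
        intro x hx
        have h1 : ∫ t in (0:ℝ)..x, F t ≤ ∫ t in (0:ℝ)..x, F x :=
          intervalIntegral.integral_mono_on hx.le (hint 0 x) intervalIntegrable_const
            (fun t ht => hmono ht.2)
        rw [intervalIntegral.integral_const, smul_eq_mul, sub_zero] at h1
        have h2 := hu x
        nlinarith [h2.trans h1]
      have htend : Tendsto F (𝓝[>] (0:ℝ)) (𝓝 (F 0)) :=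
        hrc.tendsto.mono_left (nhdsWithin_mono _ Ioi_subset_Ici_self)
      exact ge_of_tendsto htend (eventually_nhdsWithin_of_forall fun x hx => key x hx)
  have hnn : ∀ u : ℝ, (0 : EReal) ≤ iqf P X u := by
    intro u
    have h := le_iSup (fun x : ℝ => ((x * u - idf P X x : ℝ) : EReal)) 0
    simp only [zero_mul, hidf0, sub_zero, EReal.coe_zero] at h
    exact h
  refine ⟨hnn, ?_⟩
  ext u
  simp only [Set.mem_setOf_eq]
  constructor
  · intro h
    apply lemB u
    intro x
    have hle : ((x * u - idf P X x : ℝ) : EReal) ≤ (0 : EReal) := by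
      rw [← h]
      exact le_iSup (fun x : ℝ => ((x * u - idf P X x : ℝ) : EReal)) x
    rw [show (0 : EReal) = ((0:ℝ) : EReal) from rfl, EReal.coe_le_coe_iff] at hle
    linarith
  · intro hu
    refine le_antisymm ?_ (hnn u)
    apply iSup_le
    intro x
    have := lemA u hu x
    rw [show (0 : EReal) = ((0:ℝ) : EReal) from rfl, EReal.coe_le_coe_iff]
    linarith
end

section
/- Let X be a real random variable. For every u ∈ (0,1), the subdifferential of iqf_X at u equals [q_X^L(u), q_X^R(u)], where q_X^L(u) = inf{x : F_X(x) ≥ u} and q_X^R(u) = inf{x : F_X(x) > u}; in particular, the left derivative of iqf_X at u is q_X^L(u) and the right derivative is q_X^R(u). -/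
open MeasureTheory Filter Set

open Topology

namespace Stmt11Aux

variable {Ω : Type*} [MeasurableSpace Ω] (P : Measure Ω) [IsProbabilityMeasure P] (X : Ω → ℝ)

lemma cdf_eq_cdf (hX : Measurable X) :
    cdf P X = fun x => ProbabilityTheory.cdf (P.map X) x := by
  haveI : IsProbabilityMeasure (P.map X) := Measure.isProbabilityMeasure_map hX.aemeasurable
  funext x
  rw [cdf, ProbabilityTheory.cdf_eq_real, measureReal_def, Measure.map_apply hX measurableSet_Iic]
  rfl

lemma cdf_mono (hX : Measurable X) : Monotone (cdf P X) := by
  rw [cdf_eq_cdf P X hX]; exact ProbabilityTheory.monotone_cdf _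

lemma cdf_rc (hX : Measurable X) (x : ℝ) : ContinuousWithinAt (cdf P X) (Ici x) x := by
  rw [cdf_eq_cdf P X hX]; exact (ProbabilityTheory.cdf (P.map X)).right_continuous x

lemma cdf_top (hX : Measurable X) : Tendsto (cdf P X) atTop (𝓝 1) := by
  haveI : IsProbabilityMeasure (P.map X) := Measure.isProbabilityMeasure_map hX.aemeasurable
  rw [cdf_eq_cdf P X hX]; exact ProbabilityTheory.tendsto_cdf_atTop _

lemma cdf_bot (hX : Measurable X) : Tendsto (cdf P X) atBot (𝓝 0) := by
  haveI : IsProbabilityMeasure (P.map X) := Measure.isProbabilityMeasure_map hX.aemeasurable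
  rw [cdf_eq_cdf P X hX]; exact ProbabilityTheory.tendsto_cdf_atBot _

lemma cdf_ii (hX : Measurable X) (a b : ℝ) : IntervalIntegrable (cdf P X) volume a b :=
  (cdf_mono P X hX).intervalIntegrable

lemma idf_sub (hX : Measurable X) (a b : ℝ) :
    idf P X b - idf P X a = ∫ t in a..b, cdf P X t := by
  rw [idf, idf]
  rw [← intervalIntegral.integral_add_adjacent_intervals (cdf_ii P X hX 0 a) (cdf_ii P X hX a b)]
  ring

lemma S_ne (hX : Measurable X) {w : ℝ} (hw : w < 1) : {x : ℝ | w ≤ cdf P X x}.Nonempty := by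
  obtain ⟨x, hx⟩ := ((cdf_top P X hX).eventually (eventually_gt_nhds hw)).exists
  exact ⟨x, hx.le⟩

lemma T_ne (hX : Measurable X) {w : ℝ} (hw : w < 1) : {x : ℝ | w < cdf P X x}.Nonempty := by
  obtain ⟨x, hx⟩ := ((cdf_top P X hX).eventually (eventually_gt_nhds hw)).exists
  exact ⟨x, hx⟩

lemma S_bdd (hX : Measurable X) {w : ℝ} (hw : 0 < w) : BddBelow {x : ℝ | w ≤ cdf P X x} := by
  obtain ⟨x₀, hx₀⟩ := ((cdf_bot P X hX).eventually (eventually_lt_nhds hw)).exists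
  refine ⟨x₀, fun y hy => ?_⟩
  by_contra hc
  push_neg at hc
  exact absurd (le_trans hy (cdf_mono P X hX hc.le)) (not_le.2 hx₀)

lemma T_bdd (hX : Measurable X) {w : ℝ} (hw : 0 < w) : BddBelow {x : ℝ | w < cdf P X x} :=
  (S_bdd P X hX hw).mono (fun x (hx : w < cdf P X x) => le_of_lt hx)

lemma qL_le_qR (hX : Measurable X) {w : ℝ} (hw0 : 0 < w) (hw1 : w < 1) :
    sInf {x : ℝ | w ≤ cdf P X x} ≤ sInf {x : ℝ | w < cdf P X x} :=
  csInf_le_csInf (S_bdd P X hX hw0) (T_ne P X hX hw1)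
    (fun x (hx : w < cdf P X x) => le_of_lt hx)

lemma cdf_qL (hX : Measurable X) {w : ℝ} (hw1 : w < 1) :
    w ≤ cdf P X (sInf {x : ℝ | w ≤ cdf P X x}) := by
  set a := sInf {x : ℝ | w ≤ cdf P X x} with ha
  have h1 : ∀ x ∈ Ioi a, w ≤ cdf P X x := by
    intro x hx
    obtain ⟨s, hs, hsx⟩ := exists_lt_of_csInf_lt (S_ne P X hX hw1) hx
    exact le_trans hs (cdf_mono P X hX hsx.le)
  have h2 : Tendsto (cdf P X) (𝓝[>] a) (𝓝 (cdf P X a)) :=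
    (cdf_rc P X hX a).mono_left (nhdsWithin_mono a Ioi_subset_Ici_self)
  exact ge_of_tendsto h2 (eventually_nhdsWithin_of_forall h1)

lemma cdf_lt_of_lt_qL (hX : Measurable X) {w t : ℝ} (hw0 : 0 < w)
    (ht : t < sInf {x : ℝ | w ≤ cdf P X x}) : cdf P X t < w := by
  by_contra hc
  push_neg at hc
  exact absurd (csInf_le (S_bdd P X hX hw0) hc) (not_le.2 ht)

lemma cdf_le_of_lt_qR (hX : Measurable X) {w t : ℝ} (hw0 : 0 < w)
    (ht : t < sInf {x : ℝ | w < cdf P X x}) : cdf P X t ≤ w := by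
  by_contra hc
  push_neg at hc
  exact absurd (csInf_le (T_bdd P X hX hw0) hc) (not_le.2 ht)

lemma idf_le (hX : Measurable X) {x y w : ℝ} (hxy : x ≤ y)
    (h : ∀ t ∈ Ico x y, cdf P X t ≤ w) : idf P X y - idf P X x ≤ w * (y - x) := by
  rw [idf_sub P X hX]
  have hw : ∫ _t in x..y, (w : ℝ) = w * (y - x) := by
    rw [intervalIntegral.integral_const, smul_eq_mul]; ring
  rw [← hw]
  refine intervalIntegral.integral_mono_ae_restrict hxy (cdf_ii P X hX x y)
    (intervalIntegrable_const) ?_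
  rw [Filter.EventuallyLE, ae_restrict_iff' measurableSet_Icc, ae_iff]
  refine measure_mono_null (fun t ht => ?_) (measure_singleton y)
  simp only [mem_setOf_eq, not_forall] at ht
  obtain ⟨htIcc, htw⟩ := ht
  rcases lt_or_eq_of_le htIcc.2 with h1 | h1
  · exact absurd (h t ⟨htIcc.1, h1⟩) htw
  · exact h1

lemma idf_ge (hX : Measurable X) {x y w : ℝ} (hxy : x ≤ y)
    (h : ∀ t ∈ Icc x y, w ≤ cdf P X t) : w * (y - x) ≤ idf P X y - idf P X x := by
  rw [idf_sub P X hX]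
  have hw : ∫ _t in x..y, (w : ℝ) = w * (y - x) := by
    rw [intervalIntegral.integral_const, smul_eq_mul]; ring
  rw [← hw]
  exact intervalIntegral.integral_mono_on hxy intervalIntegrable_const (cdf_ii P X hX x y) h

lemma sup_attained (hX : Measurable X) {w c : ℝ} (hc1 : w ≤ cdf P X c)
    (hc2 : ∀ t, t < c → cdf P X t ≤ w) (x : ℝ) :
    x * w - idf P X x ≤ c * w - idf P X c := by
  rcases le_or_gt x c with hxc | hxc
  · have := idf_le P X hX hxc (fun t ht => hc2 t ht.2)
    nlinarith [this]
  · have := idf_ge P X hX hxc.le (fun t ht => le_trans hc1 (cdf_mono P X hX ht.1))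
    nlinarith [this]

lemma iqf_eq (hX : Measurable X) {w c : ℝ} (hc1 : w ≤ cdf P X c)
    (hc2 : ∀ t, t < c → cdf P X t ≤ w) :
    iqf P X w = ((c * w - idf P X c : ℝ) : EReal) := by
  refine le_antisymm (iSup_le fun x => ?_)
    (le_iSup (fun x : ℝ => ((x * w - idf P X x : ℝ) : EReal)) c)
  exact EReal.coe_le_coe_iff.2 (sup_attained P X hX hc1 hc2 x)

lemma attain_hyps (hX : Measurable X) {w c : ℝ} (hw0 : 0 < w) (hw1 : w < 1)
    (hc : c ∈ Icc (sInf {x : ℝ | w ≤ cdf P X x}) (sInf {x : ℝ | w < cdf P X x})) :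
    w ≤ cdf P X c ∧ ∀ t, t < c → cdf P X t ≤ w := by
  constructor
  · exact le_trans (cdf_qL P X hX hw1) (cdf_mono P X hX hc.1)
  · intro t ht
    exact cdf_le_of_lt_qR P X hX hw0 (lt_of_lt_of_le ht hc.2)

lemma iqf_toReal (hX : Measurable X) {w c : ℝ} (hw0 : 0 < w) (hw1 : w < 1)
    (hc : c ∈ Icc (sInf {x : ℝ | w ≤ cdf P X x}) (sInf {x : ℝ | w < cdf P X x})) :
    (iqf P X w).toReal = c * w - idf P X c := by
  obtain ⟨h1, h2⟩ := attain_hyps P X hX hw0 hw1 hc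
  rw [iqf_eq P X hX h1 h2, EReal.toReal_coe]

lemma iqf_toReal_ge (hX : Measurable X) {w : ℝ} (hw0 : 0 < w) (hw1 : w < 1) (x : ℝ) :
    x * w - idf P X x ≤ (iqf P X w).toReal := by
  have hmem : sInf {x : ℝ | w ≤ cdf P X x}
      ∈ Icc (sInf {x : ℝ | w ≤ cdf P X x}) (sInf {x : ℝ | w < cdf P X x}) :=
    ⟨le_refl _, qL_le_qR P X hX hw0 hw1⟩
  rw [iqf_toReal P X hX hw0 hw1 hmem]
  obtain ⟨h1, h2⟩ := attain_hyps P X hX hw0 hw1 hmem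
  exact sup_attained P X hX h1 h2 x

/-- Left continuity of `qL` at `u`. -/
lemma qL_tendsto (hX : Measurable X) {u : ℝ} (hu0 : 0 < u) (hu1 : u < 1) :
    Tendsto (fun v => sInf {x : ℝ | v ≤ cdf P X x}) (𝓝[<] u)
      (𝓝 (sInf {x : ℝ | u ≤ cdf P X x})) := by
  rw [tendsto_order]
  constructor
  · intro c hc
    set m := (c + sInf {x : ℝ | u ≤ cdf P X x}) / 2 with hm
    have hcm : c < m := by rw [hm]; linarith
    have hma : m < sInf {x : ℝ | u ≤ cdf P X x} := by rw [hm]; linarith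
    have hFm : cdf P X m < u := cdf_lt_of_lt_qL P X hX hu0 hma
    have hev : ∀ᶠ v in 𝓝[<] u, cdf P X m < v :=
      eventually_nhdsWithin_of_eventually_nhds (eventually_gt_nhds hFm)
    filter_upwards [hev, self_mem_nhdsWithin] with v hv (hvu : v < u)
    have hle : m ≤ sInf {x : ℝ | v ≤ cdf P X x} := by
      refine le_csInf (S_ne P X hX (hvu.trans hu1)) (fun s hs => ?_)
      by_contra hsm
      push_neg at hsm
      exact absurd (le_trans hs (cdf_mono P X hX hsm.le)) (not_le.2 hv)
    exact lt_of_lt_of_le hcm hle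
  · intro c hc
    have hev : ∀ᶠ v in 𝓝[<] u, (0:ℝ) < v :=
      eventually_nhdsWithin_of_eventually_nhds (eventually_gt_nhds hu0)
    filter_upwards [hev, self_mem_nhdsWithin] with v hv0 (hvu : v < u)
    calc sInf {x : ℝ | v ≤ cdf P X x} ≤ sInf {x : ℝ | u ≤ cdf P X x} :=
          csInf_le_csInf (S_bdd P X hX hv0) (S_ne P X hX hu1)
            (fun x hx => le_trans hvu.le hx)
      _ < c := hc

/-- Right continuity of `qR` at `u`. -/
lemma qR_tendsto (hX : Measurable X) {u : ℝ} (hu0 : 0 < u) (hu1 : u < 1) :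
    Tendsto (fun v => sInf {x : ℝ | v < cdf P X x}) (𝓝[>] u)
      (𝓝 (sInf {x : ℝ | u < cdf P X x})) := by
  rw [tendsto_order]
  constructor
  · intro c hc
    have hev : ∀ᶠ v in 𝓝[>] u, v < 1 :=
      eventually_nhdsWithin_of_eventually_nhds (eventually_lt_nhds hu1)
    filter_upwards [hev, self_mem_nhdsWithin] with v hv1 (huv : u < v)
    have hle : sInf {x : ℝ | u < cdf P X x} ≤ sInf {x : ℝ | v < cdf P X x} :=
      csInf_le_csInf (T_bdd P X hX hu0) (T_ne P X hX hv1)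
        (fun x hx => lt_trans huv hx)
    exact lt_of_lt_of_le hc hle
  · intro c hc
    set m := (sInf {x : ℝ | u < cdf P X x} + c) / 2 with hm
    have hbm : sInf {x : ℝ | u < cdf P X x} < m := by rw [hm]; linarith
    have hmc : m < c := by rw [hm]; linarith
    have hFm : u < cdf P X m := by
      obtain ⟨s, hs, hsm⟩ := exists_lt_of_csInf_lt (T_ne P X hX hu1) hbm
      exact lt_of_lt_of_le hs (cdf_mono P X hX hsm.le)
    have hev : ∀ᶠ v in 𝓝[>] u, v < cdf P X m :=
      eventually_nhdsWithin_of_eventually_nhds (eventually_lt_nhds hFm)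
    filter_upwards [hev, self_mem_nhdsWithin] with v hv (huv : u < v)
    have : sInf {x : ℝ | v < cdf P X x} ≤ m :=
      csInf_le (T_bdd P X hX (hu0.trans huv)) hv
    exact lt_of_le_of_lt this hmc

end Stmt11Aux

theorem stmt11 {Ω : Type*} [MeasurableSpace Ω] (P : Measure Ω) [IsProbabilityMeasure P]
    (X : Ω → ℝ) (hX : Measurable X) (u : ℝ) (hu : u ∈ Set.Ioo (0:ℝ) 1) :
    {x : ℝ | ∀ v : ℝ, iqf P X u + ((x * (v - u) : ℝ) : EReal) ≤ iqf P X v}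
      = Set.Icc (sInf {x : ℝ | u ≤ cdf P X x}) (sInf {x : ℝ | u < cdf P X x}) ∧
    HasDerivWithinAt (fun v => (iqf P X v).toReal) (sInf {x : ℝ | u ≤ cdf P X x}) (Set.Iio u) u ∧
    HasDerivWithinAt (fun v => (iqf P X v).toReal) (sInf {x : ℝ | u < cdf P X x}) (Set.Ioi u) u := by
  open Stmt11Aux in
  obtain ⟨hu0, hu1⟩ := hu
  set a := sInf {x : ℝ | u ≤ cdf P X x} with ha
  set b := sInf {x : ℝ | u < cdf P X x} with hb
  have hab : a ≤ b := qL_le_qR P X hX hu0 hu1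
  set f : ℝ → ℝ := fun v => (iqf P X v).toReal with hf
  -- difference quotient bounds, left side
  have key_left : ∀ v : ℝ, 0 < v → v < u →
      sInf {x : ℝ | v ≤ cdf P X x} ≤ (f v - f u) / (v - u) ∧ (f v - f u) / (v - u) ≤ a := by
    intro v hv0 hvu
    set av := sInf {x : ℝ | v ≤ cdf P X x} with hav
    have hv1 : v < 1 := hvu.trans hu1
    have hfv : f v = av * v - idf P X av :=
      iqf_toReal P X hX hv0 hv1 ⟨le_refl _, qL_le_qR P X hX hv0 hv1⟩
    have hfu : f u = a * u - idf P X a :=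
      iqf_toReal P X hX hu0 hu1 ⟨le_refl _, hab⟩
    have hneg : v - u < 0 := by linarith
    constructor
    · rw [le_div_iff_of_neg hneg]
      have h1 : av * u - idf P X av ≤ f u := iqf_toReal_ge P X hX hu0 hu1 av
      rw [hfv]; nlinarith [h1]
    · rw [div_le_iff_of_neg hneg]
      have h2 : a * v - idf P X a ≤ f v := iqf_toReal_ge P X hX hv0 hv1 a
      rw [hfu]; nlinarith [h2]
  -- difference quotient bounds, right side
  have key_right : ∀ v : ℝ, u < v → v < 1 →
      b ≤ (f v - f u) / (v - u) ∧ (f v - f u) / (v - u) ≤ sInf {x : ℝ | v < cdf P X x} := by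
    intro v huv hv1
    set bv := sInf {x : ℝ | v < cdf P X x} with hbv
    have hv0 : 0 < v := hu0.trans huv
    have hfv : f v = bv * v - idf P X bv :=
      iqf_toReal P X hX hv0 hv1 ⟨qL_le_qR P X hX hv0 hv1, le_refl _⟩
    have hfu : f u = b * u - idf P X b :=
      iqf_toReal P X hX hu0 hu1 ⟨hab, le_refl _⟩
    have hpos : 0 < v - u := by linarith
    constructor
    · rw [le_div_iff₀ hpos]
      have h1 : b * v - idf P X b ≤ f v := iqf_toReal_ge P X hX hv0 hv1 b
      rw [hfu]; nlinarith [h1]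
    · rw [div_le_iff₀ hpos]
      have h2 : bv * u - idf P X bv ≤ f u := iqf_toReal_ge P X hX hu0 hu1 bv
      rw [hfv]; nlinarith [h2]
  have hevL0 : ∀ᶠ v in 𝓝[<] u, (0:ℝ) < v :=
    eventually_nhdsWithin_of_eventually_nhds (eventually_gt_nhds hu0)
  have hevR1 : ∀ᶠ v in 𝓝[>] u, v < 1 :=
    eventually_nhdsWithin_of_eventually_nhds (eventually_lt_nhds hu1)
  -- left derivative
  have hL : HasDerivWithinAt f a (Set.Iio u) u := by
    rw [hasDerivWithinAt_iff_tendsto_slope]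
    have hdiff : Iio u \ {u} = Iio u := by simp
    rw [hdiff]
    have hslope : slope f u = fun v => (f v - f u) / (v - u) := by
      funext v; rw [slope_def_field]
    rw [hslope]
    refine tendsto_of_tendsto_of_tendsto_of_le_of_le' (qL_tendsto P X hX hu0 hu1)
      tendsto_const_nhds ?_ ?_
    · filter_upwards [hevL0, self_mem_nhdsWithin] with v hv0 (hvu : v < u)
      exact (key_left v hv0 hvu).1
    · filter_upwards [hevL0, self_mem_nhdsWithin] with v hv0 (hvu : v < u)
      exact (key_left v hv0 hvu).2
  -- right derivative
  have hR : HasDerivWithinAt f b (Set.Ioi u) u := by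
    rw [hasDerivWithinAt_iff_tendsto_slope]
    have hdiff : Ioi u \ {u} = Ioi u := by simp
    rw [hdiff]
    have hslope : slope f u = fun v => (f v - f u) / (v - u) := by
      funext v; rw [slope_def_field]
    rw [hslope]
    refine tendsto_of_tendsto_of_tendsto_of_le_of_le' tendsto_const_nhds
      (qR_tendsto P X hX hu0 hu1) ?_ ?_
    · filter_upwards [hevR1, self_mem_nhdsWithin] with v hv1 (huv : u < v)
      exact (key_right v huv hv1).1
    · filter_upwards [hevR1, self_mem_nhdsWithin] with v hv1 (huv : u < v)
      exact (key_right v huv hv1).2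
  refine ⟨?_, hL, hR⟩
  -- the subdifferential
  ext x
  simp only [Set.mem_setOf_eq, Set.mem_Icc]
  constructor
  · intro h
    have hreal : ∀ v : ℝ, 0 < v → v < 1 → f u + x * (v - u) ≤ f v := by
      intro v hv0 hv1
      obtain ⟨hA1, hA2⟩ := attain_hyps P X hX hu0 hu1 ⟨le_refl _, hab⟩
      have heu := iqf_eq P X hX hA1 hA2
      have hu' : iqf P X u = ((f u : ℝ) : EReal) := by
        show iqf P X u = (((iqf P X u).toReal : ℝ) : EReal)
        rw [heu, EReal.toReal_coe]
      obtain ⟨hB1, hB2⟩ := attain_hyps P X hX hv0 hv1 ⟨le_refl _, qL_le_qR P X hX hv0 hv1⟩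
      have hev' := iqf_eq P X hX hB1 hB2
      have hv' : iqf P X v = ((f v : ℝ) : EReal) := by
        show iqf P X v = (((iqf P X v).toReal : ℝ) : EReal)
        rw [hev', EReal.toReal_coe]
      have := h v
      rw [hu', hv', ← EReal.coe_add, EReal.coe_le_coe_iff] at this
      exact this
    constructor
    · -- a ≤ x
      refine le_of_tendsto (qL_tendsto P X hX hu0 hu1) ?_
      filter_upwards [hevL0, self_mem_nhdsWithin] with v hv0 (hvu : v < u)
      have h1 := (key_left v hv0 hvu).1
      have h2 := hreal v hv0 (hvu.trans hu1)
      have hneg : v - u < 0 := by linarith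
      rw [le_div_iff_of_neg hneg] at h1
      nlinarith [h1, h2]
    · -- x ≤ b
      refine ge_of_tendsto (qR_tendsto P X hX hu0 hu1) ?_
      filter_upwards [hevR1, self_mem_nhdsWithin] with v hv1 (huv : u < v)
      have h1 := (key_right v huv hv1).2
      have h2 := hreal v (hu0.trans huv) hv1
      have hpos : 0 < v - u := by linarith
      rw [div_le_iff₀ hpos] at h1
      nlinarith [h1, h2]
  · rintro ⟨hax, hxb⟩ v
    have hu' : iqf P X u = ((x * u - idf P X x : ℝ) : EReal) := by
      obtain ⟨h1, h2⟩ := attain_hyps P X hX hu0 hu1 ⟨hax, hxb⟩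
      exact iqf_eq P X hX h1 h2
    rw [hu', ← EReal.coe_add]
    have : (x * u - idf P X x + x * (v - u) : ℝ) = x * v - idf P X x := by ring
    rw [this]
    exact le_iSup (fun y : ℝ => ((y * v - idf P X y : ℝ) : EReal)) x
end

section
/- Let K : ℝ → [0,∞] be a convex lower semicontinuous function with (0,1) ⊆ dom K ⊆ [0,1], and suppose there is u₀ ∈ [0,1] with K(u₀) = 0. Then there exists a real random variable X (on the unit interval with Lebesgue measure) whose integrated quantile function iqf_X equals K. The random variable can be taken to be X(ω) = K′₋(ω), the left derivative of K at ω ∈ (0,1). -/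
open MeasureTheory Filter Set

namespace Stmt13Aux

/-- real version of `K` -/
noncomputable def kf (K : ℝ → EReal) : ℝ → ℝ := fun u => (K u).toReal

/-- left derivative of `kf K` (meaningful on `Ioo 0 1`) -/
noncomputable def gl (K : ℝ → EReal) : ℝ → ℝ :=
  fun x => sSup (slope (kf K) x '' Ioo 0 x)

/-- right derivative of `kf K` (meaningful on `Ioo 0 1`) -/
noncomputable def gr (K : ℝ → EReal) : ℝ → ℝ :=
  fun x => sInf (slope (kf K) x '' Ioo x 1)

/-- the random variable -/
noncomputable def Xf (K : ℝ → EReal) : ℝ → ℝ := (Ioo 0 1).piecewise (gl K) 0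

/-- the cdf of `Xf K` under Lebesgue on `(0,1)` -/
noncomputable def Ff (K : ℝ → EReal) : ℝ → ℝ :=
  fun t => (volume {ω : ℝ | ω ∈ Ioo (0:ℝ) 1 ∧ gl K ω ≤ t}).toReal

/-- integrated distribution function -/
noncomputable def Fint (K : ℝ → EReal) : ℝ → ℝ := fun x => ∫ t in (0:ℝ)..x, Ff K t

section Basic

variable {K : ℝ → EReal}

section ConvexKf

variable (hconv' : ConvexOn ℝ (Ioo (0:ℝ) 1) (kf K))
include hconv'

lemma slope_monoOn {x : ℝ} (hx : x ∈ Ioo (0:ℝ) 1) :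
    MonotoneOn (slope (kf K) x) (Ioo (0:ℝ) 1 \ {x}) := by
  intro p hp q hq hpq
  rw [slope_def_field, slope_def_field]
  exact hconv'.secant_mono hx hp.1 hq.1 hp.2 hq.2 hpq

lemma gl_le_slope {x z : ℝ} (hx : x ∈ Ioo (0:ℝ) 1) (hz : z ∈ Ioo (0:ℝ) 1) (hxz : x < z) :
    gl K x ≤ slope (kf K) x z := by
  simp only [gl, gr]
  rcases (Set.nonempty_Ioo.2 hx.1 : (Ioo (0:ℝ) x).Nonempty) with ⟨y, hy⟩
  refine csSup_le ((Set.nonempty_Ioo.2 hx.1).image _) ?_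
  rintro - ⟨y', hy', rfl⟩
  exact slope_monoOn hconv' hx ⟨⟨hy'.1, hy'.2.trans hx.2⟩, hy'.2.ne⟩ ⟨hz, hxz.ne'⟩
    (hy'.2.le.trans hxz.le)

lemma slope_le_gl {x y : ℝ} (hx : x ∈ Ioo (0:ℝ) 1) (hy : y ∈ Ioo (0:ℝ) 1) (hyx : y < x) :
    slope (kf K) x y ≤ gl K x := by
  simp only [gl, gr]
  refine le_csSup ?_ ⟨y, ⟨hy.1, hyx⟩, rfl⟩
  refine ⟨slope (kf K) x ((x+1)/2), ?_⟩
  rintro - ⟨y', hy', rfl⟩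
  have hm : (x+1)/2 ∈ Ioo (0:ℝ) 1 := by constructor <;> [linarith [hx.1, hx.2]; linarith [hx.2]]
  have h1 : y' < x := hy'.2
  have h2 : x < (x+1)/2 := by linarith [hx.2]
  exact (slope_monoOn hconv' hx ⟨⟨hy'.1, h1.trans hx.2⟩, h1.ne⟩ ⟨hm, h2.ne'⟩ (by linarith)).trans le_rfl

lemma slope_le_gr {x y : ℝ} (hx : x ∈ Ioo (0:ℝ) 1) (hy : y ∈ Ioo (0:ℝ) 1) (hyx : y < x) :
    slope (kf K) x y ≤ gr K x := by
  simp only [gl, gr]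
  refine le_csInf ((Set.nonempty_Ioo.2 hx.2).image _) ?_
  rintro - ⟨z', hz', rfl⟩
  exact slope_monoOn hconv' hx ⟨hy, hyx.ne⟩ ⟨⟨hx.1.trans hz'.1, hz'.2⟩, hz'.1.ne'⟩
    (hyx.le.trans hz'.1.le)

lemma gr_le_slope {x z : ℝ} (hx : x ∈ Ioo (0:ℝ) 1) (hz : z ∈ Ioo (0:ℝ) 1) (hxz : x < z) :
    gr K x ≤ slope (kf K) x z := by
  simp only [gl, gr]
  refine csInf_le ?_ ⟨z, ⟨hxz, hz.2⟩, rfl⟩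
  refine ⟨slope (kf K) x (x/2), ?_⟩
  rintro - ⟨z', hz', rfl⟩
  have hm : x/2 ∈ Ioo (0:ℝ) 1 := by constructor <;> [linarith [hx.1]; linarith [hx.1, hx.2]]
  have h2 : x/2 < x := by linarith [hx.1]
  exact slope_monoOn hconv' hx ⟨hm, h2.ne⟩ ⟨⟨hx.1.trans hz'.1, hz'.2⟩, hz'.1.ne'⟩ (by linarith [hz'.1])

lemma gl_le_gr {x : ℝ} (hx : x ∈ Ioo (0:ℝ) 1) : gl K x ≤ gr K x := by
  have h : gr K x = sInf (slope (kf K) x '' Ioo x 1) := rfl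
  rw [h]
  refine le_csInf ((Set.nonempty_Ioo.2 hx.2).image _) ?_
  rintro - ⟨z', hz', rfl⟩
  exact gl_le_slope hconv' hx ⟨hx.1.trans hz'.1, hz'.2⟩ hz'.1

lemma gr_le_gl {a b : ℝ} (ha : a ∈ Ioo (0:ℝ) 1) (hb : b ∈ Ioo (0:ℝ) 1) (hab : a < b) :
    gr K a ≤ gl K b := by
  have hs : gr K a ≤ slope (kf K) a b := gr_le_slope hconv' ha hb hab
  have hs2 : slope (kf K) b a ≤ gl K b := slope_le_gl hconv' hb ha hab
  rw [slope_comm] at hs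
  exact hs.trans hs2

lemma gl_mono : MonotoneOn (gl K) (Ioo (0:ℝ) 1) := by
  intro a ha b hb hab
  rcases eq_or_lt_of_le hab with rfl | h
  · exact le_rfl
  · exact (gl_le_gr hconv' ha).trans ((gr_le_slope hconv' ha hb h).trans
      (by rw [slope_comm]; exact slope_le_gl hconv' hb ha h))

lemma gl_hasDeriv {x : ℝ} (hx : x ∈ Ioo (0:ℝ) 1) :
    HasDerivWithinAt (kf K) (gl K x) (Iio x) x := by
  rw [hasDerivWithinAt_iff_tendsto_slope]
  have he : Iio x \ {x} = Iio x := by simp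
  rw [he]
  have hsub : Ioo (0:ℝ) x ⊆ Ioo (0:ℝ) 1 \ {x} :=
    fun p hp => ⟨⟨hp.1, hp.2.trans hx.2⟩, hp.2.ne⟩
  have hmono : MonotoneOn (slope (kf K) x) (Ioo (0:ℝ) x) :=
    (slope_monoOn hconv' hx).mono hsub
  have hbdd : BddAbove (slope (kf K) x '' Ioo (0:ℝ) x) := by
    refine ⟨slope (kf K) x ((x+1)/2), ?_⟩
    rintro - ⟨y', hy', rfl⟩
    have hm : (x+1)/2 ∈ Ioo (0:ℝ) 1 := by
      constructor <;> [linarith [hx.1, hx.2]; linarith [hx.2]]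
    have h2 : x < (x+1)/2 := by linarith [hx.2]
    exact slope_monoOn hconv' hx (hsub hy') ⟨hm, h2.ne'⟩ (by linarith [hy'.2])
  exact MonotoneOn.tendsto_nhdsWithin_Ioo_left (Set.nonempty_Ioo.2 hx.1) hmono hbdd

lemma gr_hasDeriv {x : ℝ} (hx : x ∈ Ioo (0:ℝ) 1) :
    HasDerivWithinAt (kf K) (gr K x) (Ioi x) x := by
  rw [hasDerivWithinAt_iff_tendsto_slope]
  have he : Ioi x \ {x} = Ioi x := by simp
  rw [he]
  have hsub : Ioo x (1:ℝ) ⊆ Ioo (0:ℝ) 1 \ {x} :=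
    fun p hp => ⟨⟨hx.1.trans hp.1, hp.2⟩, hp.1.ne'⟩
  have hmono : MonotoneOn (slope (kf K) x) (Ioo x (1:ℝ)) :=
    (slope_monoOn hconv' hx).mono hsub
  have hbdd : BddBelow (slope (kf K) x '' Ioo x (1:ℝ)) := by
    refine ⟨slope (kf K) x (x/2), ?_⟩
    rintro - ⟨z', hz', rfl⟩
    have hm : x/2 ∈ Ioo (0:ℝ) 1 := by
      constructor <;> [linarith [hx.1]; linarith [hx.1, hx.2]]
    have h2 : x/2 < x := by linarith [hx.1]
    exact slope_monoOn hconv' hx ⟨hm, h2.ne⟩ (hsub hz') (by linarith [hz'.1])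
  exact MonotoneOn.tendsto_nhdsWithin_Ioo_right (Set.nonempty_Ioo.2 hx.2) hmono hbdd

lemma Xf_measurable : Measurable (Xf K) := by
  refine measurable_of_Iic fun c => ?_
  have hset : Xf K ⁻¹' Iic c =
      (Ioo (0:ℝ) 1 ∩ gl K ⁻¹' Iic c) ∪ (if (0:ℝ) ≤ c then (Ioo (0:ℝ) 1)ᶜ else ∅) := by
    ext ω
    by_cases hω : ω ∈ Ioo (0:ℝ) 1 <;>
      by_cases hc : (0:ℝ) ≤ c <;>
      simp [Xf, Set.piecewise, hω, hc]
  rw [hset]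
  have hoc : OrdConnected (Ioo (0:ℝ) 1 ∩ gl K ⁻¹' Iic c) := by
    constructor
    intro p hp q hq r hr
    have hrm : r ∈ Ioo (0:ℝ) 1 := ⟨hp.1.1.trans_le hr.1, hr.2.trans_lt hq.1.2⟩
    exact ⟨hrm, le_trans (gl_mono hconv' hrm hq.1 hr.2) hq.2⟩
  refine MeasurableSet.union hoc.measurableSet ?_
  split <;> simp [measurableSet_Ioo, MeasurableSet.compl]

lemma ftc {a b : ℝ} (ha : a ∈ Ioo (0:ℝ) 1) (hb : b ∈ Ioo (0:ℝ) 1) (hab : a ≤ b) :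
    ∫ t in a..b, gr K t = kf K b - kf K a := by
  have hsub : Icc a b ⊆ Ioo (0:ℝ) 1 := fun t ht => ⟨ha.1.trans_le ht.1, ht.2.trans_lt hb.2⟩
  have hcont : ContinuousOn (kf K) (Icc a b) :=
    (hconv'.continuousOn isOpen_Ioo).mono hsub
  have hderiv : ∀ t ∈ Ioo a b, HasDerivWithinAt (kf K) (gr K t) (Ioi t) t :=
    fun t ht => gr_hasDeriv hconv' (hsub ⟨ht.1.le, ht.2.le⟩)
  have hint : IntervalIntegrable (gr K) volume a b := by
    refine MonotoneOn.intervalIntegrable ?_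
    rw [uIcc_of_le hab]
    intro r hr s hs hrs
    rcases eq_or_lt_of_le hrs with rfl | h
    · exact le_rfl
    · exact ((gr_le_slope hconv' (hsub hr) (hsub hs) h).trans
        (by rw [slope_comm]; exact slope_le_gl hconv' (hsub hs) (hsub hr) h)).trans
        (gl_le_gr hconv' (hsub hs))
  exact intervalIntegral.integral_eq_sub_of_hasDeriv_right_of_le hab hcont hderiv hint

/- ### cdf facts -/

lemma Ff_nonneg (t : ℝ) : 0 ≤ Ff K t := ENNReal.toReal_nonneg

lemma Ff_le_one (t : ℝ) : Ff K t ≤ 1 := by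
  refine ENNReal.toReal_le_of_le_ofReal zero_le_one ?_
  have h : {ω : ℝ | ω ∈ Ioo (0:ℝ) 1 ∧ gl K ω ≤ t} ⊆ Ioo (0:ℝ) 1 := fun ω h => h.1
  calc volume {ω : ℝ | ω ∈ Ioo (0:ℝ) 1 ∧ gl K ω ≤ t} ≤ volume (Ioo (0:ℝ) 1) := measure_mono h
    _ = ENNReal.ofReal 1 := by simp [Real.volume_Ioo]

lemma Ff_mono : Monotone (Ff K) := by
  intro t t' htt'
  have hsub : {ω : ℝ | ω ∈ Ioo (0:ℝ) 1 ∧ gl K ω ≤ t} ⊆ {ω : ℝ | ω ∈ Ioo (0:ℝ) 1 ∧ gl K ω ≤ t'} :=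
    fun ω h => ⟨h.1, h.2.trans htt'⟩
  have hne : volume {ω : ℝ | ω ∈ Ioo (0:ℝ) 1 ∧ gl K ω ≤ t'} ≠ ⊤ := by
    refine ne_top_of_le_ne_top ?_ (measure_mono (fun ω h => h.1 : _ ⊆ Ioo (0:ℝ) 1))
    simp [Real.volume_Ioo]
  exact ENNReal.toReal_mono hne (measure_mono hsub)

lemma cdf_eq : cdf ((volume : Measure ℝ).restrict (Ioo (0:ℝ) 1)) (Xf K) = Ff K := by
  funext t
  have h : ((volume : Measure ℝ).restrict (Ioo (0:ℝ) 1)) {ω | Xf K ω ≤ t}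
      = volume {ω : ℝ | ω ∈ Ioo (0:ℝ) 1 ∧ gl K ω ≤ t} := by
    rw [Measure.restrict_apply' measurableSet_Ioo]
    congr 1
    ext ω
    simp only [Set.mem_inter_iff, Set.mem_setOf_eq, Set.mem_Ioo]
    by_cases hω : 0 < ω ∧ ω < 1
    · simp [Xf, Set.piecewise, Set.mem_Ioo, hω]
    · simp [Xf, Set.piecewise, Set.mem_Ioo, hω]
  simp only [cdf, Ff, h]

lemma idf_eq : idf ((volume : Measure ℝ).restrict (Ioo (0:ℝ) 1)) (Xf K) = Fint K := by
  funext x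
  simp only [idf, Fint, cdf_eq hconv']

lemma le_Ff {u t : ℝ} (hu : u ∈ Ioo (0:ℝ) 1) (ht : gl K u ≤ t) : u ≤ Ff K t := by
  have hsub : Ioo (0:ℝ) u ⊆ {ω : ℝ | ω ∈ Ioo (0:ℝ) 1 ∧ gl K ω ≤ t} := by
    intro ω hω
    have hωm : ω ∈ Ioo (0:ℝ) 1 := ⟨hω.1, hω.2.trans hu.2⟩
    exact ⟨hωm, (gl_mono hconv' hωm hu hω.2.le).trans ht⟩
  have h1 : ENNReal.ofReal u ≤ volume {ω : ℝ | ω ∈ Ioo (0:ℝ) 1 ∧ gl K ω ≤ t} := by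
    calc ENNReal.ofReal u = volume (Ioo (0:ℝ) u) := by simp [Real.volume_Ioo]
      _ ≤ _ := measure_mono hsub
  have hne : volume {ω : ℝ | ω ∈ Ioo (0:ℝ) 1 ∧ gl K ω ≤ t} ≠ ⊤ := by
    refine ne_top_of_le_ne_top ?_ (measure_mono (fun ω h => h.1 : _ ⊆ Ioo (0:ℝ) 1))
    simp [Real.volume_Ioo]
  calc u = (ENNReal.ofReal u).toReal := by rw [ENNReal.toReal_ofReal hu.1.le]
    _ ≤ _ := ENNReal.toReal_mono hne h1

lemma Ff_le {v t : ℝ} (hv : 0 ≤ v)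
    (h : ∀ ω ∈ Ioo (0:ℝ) 1, gl K ω ≤ t → ω ≤ v) : Ff K t ≤ v := by
  refine ENNReal.toReal_le_of_le_ofReal hv ?_
  have hsub : {ω : ℝ | ω ∈ Ioo (0:ℝ) 1 ∧ gl K ω ≤ t} ⊆ Ioc (0:ℝ) v :=
    fun ω hω => ⟨hω.1.1, h ω hω.1 hω.2⟩
  calc volume {ω : ℝ | ω ∈ Ioo (0:ℝ) 1 ∧ gl K ω ≤ t} ≤ volume (Ioc (0:ℝ) v) := measure_mono hsub
    _ ≤ ENNReal.ofReal v := by simp [Real.volume_Ioc]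

lemma Ff_le' {u t : ℝ} (hu : u ∈ Ioo (0:ℝ) 1) (ht : t < gl K u) : Ff K t ≤ u := by
  refine Ff_le hconv' hu.1.le fun ω hω hglω => ?_
  by_contra hcon
  push_neg at hcon
  exact absurd ((gl_mono hconv' hu hω hcon.le).trans hglω) (not_le.2 ht)

lemma Ff_intble (p q : ℝ) : IntervalIntegrable (Ff K) volume p q := ((Ff_mono hconv').monotoneOn _).intervalIntegrable

end ConvexKf

/- ### generic interval integral bounds -/

lemma int_le_of_Ico {f : ℝ → ℝ} {p q v : ℝ} (hpq : p ≤ q)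
    (hint : IntervalIntegrable f volume p q)
    (h : ∀ t ∈ Ico p q, f t ≤ v) : ∫ t in p..q, f t ≤ v * (q - p) := by
  rcases eq_or_lt_of_le hpq with rfl | hlt
  · simp
  have hae : f ≤ᶠ[ae ((volume : Measure ℝ).restrict (Icc p q))] fun _ => v := by
    have h0 : ∀ᵐ (t : ℝ), t ≠ q := by rw [ae_iff]; simp [Set.setOf_eq_eq_singleton']
    filter_upwards [ae_restrict_of_ae h0, ae_restrict_mem measurableSet_Icc] with t ht1 ht2
    exact h t ⟨ht2.1, lt_of_le_of_ne ht2.2 ht1⟩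
  calc ∫ t in p..q, f t ≤ ∫ _ in p..q, v :=
      intervalIntegral.integral_mono_ae_restrict hpq hint intervalIntegrable_const hae
    _ = v * (q - p) := by rw [intervalIntegral.integral_const, smul_eq_mul, mul_comm]

lemma le_int_of_Ioc {f : ℝ → ℝ} {p q m : ℝ} (hpq : p ≤ q)
    (hint : IntervalIntegrable f volume p q)
    (h : ∀ t ∈ Ioc p q, m ≤ f t) : m * (q - p) ≤ ∫ t in p..q, f t := by
  rcases eq_or_lt_of_le hpq with rfl | hlt
  · simp
  have hae : (fun _ => m) ≤ᶠ[ae ((volume : Measure ℝ).restrict (Icc p q))] f := by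
    have h0 : ∀ᵐ (t : ℝ), t ≠ p := by rw [ae_iff]; simp [Set.setOf_eq_eq_singleton']
    filter_upwards [ae_restrict_of_ae h0, ae_restrict_mem measurableSet_Icc] with t ht1 ht2
    exact h t ⟨lt_of_le_of_ne ht2.1 (Ne.symm ht1), ht2.2⟩
  have hmono : (∫ _ in p..q, m) ≤ ∫ t in p..q, f t :=
    intervalIntegral.integral_mono_ae_restrict hpq intervalIntegrable_const hint hae
  rw [intervalIntegral.integral_const, smul_eq_mul] at hmono
  linarith

end Basic

/- ### transfer of convexity, chord bounds -/

section Transfer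

variable {K : ℝ → EReal}

lemma hKbot (hnonneg : ∀ u : ℝ, (0 : EReal) ≤ K u) (u : ℝ) : K u ≠ ⊥ :=
  fun h => by simpa [h] using hnonneg u

lemma kf_nonneg (hnonneg : ∀ u : ℝ, (0 : EReal) ≤ K u) (u : ℝ) : 0 ≤ kf K u := by
  by_cases h : K u = ⊤
  · simp [kf, h]
  · have h2 := EReal.toReal_le_toReal (hnonneg u) (by simp) h
    simpa [kf] using h2

lemma chord_bound (hnonneg : ∀ u : ℝ, (0 : EReal) ≤ K u)
    (hconv : ∀ u v a b : ℝ, 0 ≤ a → 0 ≤ b → a + b = 1 →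
      K (a * u + b * v) ≤ ((a : ℝ) : EReal) * K u + ((b : ℝ) : EReal) * K v)
    {p q t : ℝ} (hp : K p ≠ ⊤) (hq : K q ≠ ⊤) (ht0 : 0 ≤ t) (ht1 : t ≤ 1) :
    kf K ((1 - t) * p + t * q) ≤ (1 - t) * kf K p + t * kf K q := by
  have key := hconv p q (1 - t) t (by linarith) ht0 (by linarith)
  have hkp : K p = ((kf K p : ℝ) : EReal) := (EReal.coe_toReal hp (hKbot hnonneg p)).symm
  have hkq : K q = ((kf K q : ℝ) : EReal) := (EReal.coe_toReal hq (hKbot hnonneg q)).symm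
  rw [hkp, hkq, ← EReal.coe_mul, ← EReal.coe_mul, ← EReal.coe_add] at key
  have := EReal.toReal_le_toReal key (hKbot hnonneg _) (EReal.coe_ne_top _)
  rwa [EReal.toReal_coe] at this

lemma kf_convexOn (hnonneg : ∀ u : ℝ, (0 : EReal) ≤ K u)
    (hconv : ∀ u v a b : ℝ, 0 ≤ a → 0 ≤ b → a + b = 1 →
      K (a * u + b * v) ≤ ((a : ℝ) : EReal) * K u + ((b : ℝ) : EReal) * K v)
    (hdom1 : Set.Ioo (0:ℝ) 1 ⊆ {u : ℝ | K u ≠ ⊤}) :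
    ConvexOn ℝ (Ioo (0:ℝ) 1) (kf K) := by
  refine ⟨convex_Ioo 0 1, fun x hx y hy a b ha hb hab => ?_⟩
  simp only [smul_eq_mul]
  have key := hconv x y a b ha hb hab
  have hkx : K x = ((kf K x : ℝ) : EReal) := (EReal.coe_toReal (hdom1 hx) (hKbot hnonneg x)).symm
  have hky : K y = ((kf K y : ℝ) : EReal) := (EReal.coe_toReal (hdom1 hy) (hKbot hnonneg y)).symm
  rw [hkx, hky, ← EReal.coe_mul, ← EReal.coe_mul, ← EReal.coe_add] at key
  have := EReal.toReal_le_toReal key (hKbot hnonneg _) (EReal.coe_ne_top _)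
  rwa [EReal.toReal_coe] at this

lemma kf_small (hnonneg : ∀ u : ℝ, (0 : EReal) ≤ K u)
    (hconv : ∀ u v a b : ℝ, 0 ≤ a → 0 ≤ b → a + b = 1 →
      K (a * u + b * v) ≤ ((a : ℝ) : EReal) * K u + ((b : ℝ) : EReal) * K v)
    (hdom1 : Set.Ioo (0:ℝ) 1 ⊆ {u : ℝ | K u ≠ ⊤})
    (hzero : ∃ u₀ ∈ Set.Icc (0:ℝ) 1, K u₀ = 0) {ε : ℝ} (hε : 0 < ε) :
    ∃ u ∈ Ioo (0:ℝ) 1, kf K u ≤ ε := by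
  obtain ⟨u₀, hu₀m, hu₀⟩ := hzero
  have hhalf : (1/2 : ℝ) ∈ Ioo (0:ℝ) 1 := by norm_num
  have hKh : K (1/2 : ℝ) ≠ ⊤ := hdom1 hhalf
  set k2 := kf K (1/2) with hk2
  have hk2n : 0 ≤ k2 := kf_nonneg hnonneg _
  rcases lt_trichotomy u₀ 0 with h | h | h
  · exact absurd hu₀m.1 (not_le.2 h)
  · -- u₀ = 0
    have hK0 : K 0 = 0 := h ▸ hu₀
    set t := min 1 (ε / (k2 + 1)) with htdef
    have ht0 : 0 < t := lt_min one_pos (div_pos hε (by linarith))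
    have ht1 : t ≤ 1 := min_le_left _ _
    have hch := chord_bound hnonneg hconv (p := 0) (q := 1/2) (t := t)
      (by rw [hK0]; exact EReal.zero_ne_top) hKh ht0.le ht1
    have hkf0 : kf K 0 = 0 := by simp [kf, hK0]
    refine ⟨(1 - t) * 0 + t * (1/2), ⟨by linarith, by linarith⟩, ?_⟩
    have h2 : t * k2 ≤ ε := by
      have h3 : t ≤ ε / (k2 + 1) := min_le_right _ _
      have h4 : t * (k2 + 1) ≤ ε := by
        rw [← le_div_iff₀ (by linarith : (0:ℝ) < k2 + 1)]; exact h3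
      nlinarith
    calc kf K ((1 - t) * 0 + t * (1/2)) ≤ (1 - t) * kf K 0 + t * k2 := hch
      _ ≤ ε := by rw [hkf0]; linarith
  · rcases lt_trichotomy u₀ 1 with h1 | h1 | h1
    · exact ⟨u₀, ⟨h, h1⟩, by simp [kf, hu₀, hε.le]⟩
    · -- u₀ = 1
      have hK1 : K 1 = 0 := h1 ▸ hu₀
      set t := min 1 (ε / (k2 + 1)) with htdef
      have ht0 : 0 < t := lt_min one_pos (div_pos hε (by linarith))
      have ht1 : t ≤ 1 := min_le_left _ _
      have hch := chord_bound hnonneg hconv (p := 1) (q := 1/2) (t := t)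
        (by rw [hK1]; exact EReal.zero_ne_top) hKh ht0.le ht1
      have hkf1 : kf K 1 = 0 := by simp [kf, hK1]
      refine ⟨(1 - t) * 1 + t * (1/2), ⟨by linarith, by linarith⟩, ?_⟩
      have h2 : t * k2 ≤ ε := by
        have h3 : t ≤ ε / (k2 + 1) := min_le_right _ _
        have h4 : t * (k2 + 1) ≤ ε := by
          rw [← le_div_iff₀ (by linarith : (0:ℝ) < k2 + 1)]; exact h3
        nlinarith
      calc kf K ((1 - t) * 1 + t * (1/2)) ≤ (1 - t) * kf K 1 + t * k2 := hch
        _ ≤ ε := by rw [hkf1]; linarith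
    · exact absurd hu₀m.2 (not_le.2 h1)

end Transfer

/- ### the function B and its vanishing -/

section BSection

variable {K : ℝ → EReal}

/-- the defect function -/
noncomputable def Bf (K : ℝ → EReal) : ℝ → ℝ :=
  fun u => Fint K (gl K u) - gl K u * u + kf K u

variable (hconv' : ConvexOn ℝ (Ioo (0:ℝ) 1) (kf K))
include hconv'

lemma gr_mono : MonotoneOn (gr K) (Ioo (0:ℝ) 1) := by
  intro r hr s hs hrs
  rcases eq_or_lt_of_le hrs with rfl | h
  · exact le_rfl
  · exact (gr_le_gl hconv' hr hs h).trans (gl_le_gr hconv' hs)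

lemma gr_intble {a b : ℝ} (ha : a ∈ Ioo (0:ℝ) 1) (hb : b ∈ Ioo (0:ℝ) 1) (hab : a ≤ b) :
    IntervalIntegrable (gr K) volume a b := by
  refine MonotoneOn.intervalIntegrable ((gr_mono hconv').mono ?_)
  rw [uIcc_of_le hab]
  exact fun t ht => ⟨ha.1.trans_le ht.1, ht.2.trans_lt hb.2⟩

lemma Fint_sub (p q : ℝ) : Fint K q - Fint K p = ∫ t in p..q, Ff K t := by
  simp only [Fint]
  exact intervalIntegral.integral_interval_sub_left (Ff_intble hconv' 0 q) (Ff_intble hconv' 0 p)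

lemma Fint_nonneg {x : ℝ} (hx : 0 ≤ x) : 0 ≤ Fint K x := by
  have h := le_int_of_Ioc (m := 0) hx (Ff_intble hconv' 0 x)
    (fun t _ => Ff_nonneg hconv' t)
  simpa [Fint] using h

lemma Fint_le_self {x : ℝ} (hx : 0 ≤ x) : Fint K x ≤ x := by
  have h := int_le_of_Ico (v := 1) hx (Ff_intble hconv' 0 x)
    (fun t _ => Ff_le_one hconv' t)
  simpa [Fint] using h

lemma Fint_nonpos {x : ℝ} (hx : x ≤ 0) : Fint K x ≤ 0 := by
  have h := le_int_of_Ioc (m := 0) hx (Ff_intble hconv' x 0)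
    (fun t _ => Ff_nonneg hconv' t)
  have h2 : Fint K 0 - Fint K x = ∫ t in x..(0:ℝ), Ff K t := Fint_sub hconv' x 0
  have h3 : Fint K 0 = 0 := by simp [Fint]
  simp only [h3] at h2
  linarith [h2 ▸ h]

lemma FintGl_le {u : ℝ} (hu : u ∈ Ioo (0:ℝ) 1) : Fint K (gl K u) ≤ u * gl K u := by
  rcases le_or_gt 0 (gl K u) with h | h
  · have hb := int_le_of_Ico (v := u) h (Ff_intble hconv' 0 (gl K u))
      (fun t ht => Ff_le' hconv' hu ht.2)
    have h2 : Fint K (gl K u) - Fint K 0 = ∫ t in (0:ℝ)..(gl K u), Ff K t :=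
      Fint_sub hconv' 0 (gl K u)
    have h3 : Fint K 0 = 0 := by simp [Fint]
    rw [h3, sub_zero] at h2
    rw [h2]
    calc (∫ t in (0:ℝ)..(gl K u), Ff K t) ≤ u * (gl K u - 0) := hb
      _ = u * gl K u := by ring
  · have hb := le_int_of_Ioc (m := u) h.le (Ff_intble hconv' (gl K u) 0)
      (fun t ht => le_Ff hconv' hu ht.1.le)
    have h2 : Fint K 0 - Fint K (gl K u) = ∫ t in (gl K u)..(0:ℝ), Ff K t :=
      Fint_sub hconv' (gl K u) 0
    have h3 : Fint K 0 = 0 := by simp [Fint]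
    rw [h3, zero_sub] at h2
    nlinarith [h2 ▸ hb]

lemma B_le_kf {u : ℝ} (hu : u ∈ Ioo (0:ℝ) 1) : Bf K u ≤ kf K u := by
  have := FintGl_le hconv' hu
  simp only [Bf]
  nlinarith

lemma B_diff {u v : ℝ} (hu : u ∈ Ioo (0:ℝ) 1) (hv : v ∈ Ioo (0:ℝ) 1) (huv : u ≤ v) :
    |Bf K v - Bf K u| ≤ (v - u) * (gl K v - gl K u) := by
  have hgluv : gl K u ≤ gl K v := gl_mono hconv' hu hv huv
  have e1 : Fint K (gl K v) - Fint K (gl K u) = ∫ t in (gl K u)..(gl K v), Ff K t :=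
    Fint_sub hconv' _ _
  have low1 : u * (gl K v - gl K u) ≤ ∫ t in (gl K u)..(gl K v), Ff K t :=
    le_int_of_Ioc hgluv (Ff_intble hconv' _ _) (fun t ht => le_Ff hconv' hu ht.1.le)
  have up1 : (∫ t in (gl K u)..(gl K v), Ff K t) ≤ v * (gl K v - gl K u) :=
    int_le_of_Ico hgluv (Ff_intble hconv' _ _) (fun t ht => Ff_le' hconv' hv ht.2)
  have e2 : kf K v - kf K u = ∫ t in u..v, gr K t := (ftc hconv' hu hv huv).symm
  have low2 : gl K u * (v - u) ≤ ∫ t in u..v, gr K t := by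
    refine le_int_of_Ioc huv (gr_intble hconv' hu hv huv) (fun t ht => ?_)
    have htm : t ∈ Ioo (0:ℝ) 1 := ⟨hu.1.trans ht.1, lt_of_le_of_lt ht.2 hv.2⟩
    exact (gl_mono hconv' hu htm ht.1.le).trans (gl_le_gr hconv' htm)
  have up2 : (∫ t in u..v, gr K t) ≤ gl K v * (v - u) := by
    refine int_le_of_Ico huv (gr_intble hconv' hu hv huv) (fun t ht => ?_)
    have htm : t ∈ Ioo (0:ℝ) 1 := ⟨hu.1.trans_le ht.1, ht.2.trans hv.2⟩
    exact gr_le_gl hconv' htm hv ht.2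
  simp only [Bf]
  rw [abs_le]
  constructor
  · nlinarith [e1, low1, e2, low2]
  · nlinarith [e1, up1, e2, up2]

lemma B_const {u v : ℝ} (hu : u ∈ Ioo (0:ℝ) 1) (hv : v ∈ Ioo (0:ℝ) 1) :
    Bf K u = Bf K v := by
  wlog huv : u ≤ v generalizing u v
  · exact (this hv hu (le_of_not_ge huv)).symm
  rcases eq_or_lt_of_le huv with rfl | hlt
  · rfl
  have key : ∀ n : ℕ, 0 < n → |Bf K v - Bf K u| ≤ ((v - u) / n) * (gl K v - gl K u) := by
    intro n hn
    have hnR : (0:ℝ) < n := Nat.cast_pos.2 hn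
    set d : ℝ := (v - u) / n with hd
    have hd0 : 0 < d := div_pos (by linarith) hnR
    set a : ℕ → ℝ := fun i => u + i * d with ha
    have ha0 : a 0 = u := by simp [ha]
    have haN : a n = v := by simp only [ha, hd]; field_simp; ring
    have hmem : ∀ i ≤ n, a i ∈ Ioo (0:ℝ) 1 := by
      intro i hi
      have h1 : (0:ℝ) ≤ i := Nat.cast_nonneg i
      have h2 : (i:ℝ) ≤ n := Nat.cast_le.2 hi
      have hle : a i ≤ v := by
        have : (i:ℝ) * d ≤ n * d := by nlinarith
        have hnd : (n:ℝ) * d = v - u := by rw [hd]; field_simp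
        simp only [ha]; linarith [hnd ▸ this]
      have hge : u ≤ a i := by simp only [ha]; nlinarith
      exact ⟨hu.1.trans_le hge, lt_of_le_of_lt hle hv.2⟩
    have hstep : ∀ i < n, |Bf K (a (i+1)) - Bf K (a i)| ≤ d * (gl K (a (i+1)) - gl K (a i)) := by
      intro i hi
      have h1 : a (i+1) - a i = d := by simp only [ha]; push_cast; ring
      have := B_diff hconv' (hmem i hi.le) (hmem (i+1) hi) (by rw [← sub_nonneg, h1]; exact hd0.le)
      rwa [h1] at this
    have htel : Bf K v - Bf K u = ∑ i ∈ Finset.range n, (Bf K (a (i+1)) - Bf K (a i)) := by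
      rw [Finset.sum_range_sub (fun i => Bf K (a i)), ha0, haN]
    have htel2 : ∑ i ∈ Finset.range n, (gl K (a (i+1)) - gl K (a i)) = gl K v - gl K u := by
      rw [Finset.sum_range_sub (fun i => gl K (a i)), ha0, haN]
    calc |Bf K v - Bf K u| ≤ ∑ i ∈ Finset.range n, |Bf K (a (i+1)) - Bf K (a i)| := by
          rw [htel]; exact Finset.abs_sum_le_sum_abs _ _
      _ ≤ ∑ i ∈ Finset.range n, d * (gl K (a (i+1)) - gl K (a i)) :=
          Finset.sum_le_sum (fun i hi => hstep i (Finset.mem_range.1 hi))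
      _ = d * (gl K v - gl K u) := by rw [← Finset.mul_sum, htel2]
  have habs : |Bf K v - Bf K u| ≤ 0 := by
    by_contra hcon
    push_neg at hcon
    set C := (v - u) * (gl K v - gl K u) with hC
    have hC0 : 0 ≤ C := by
      have := gl_mono hconv' hu hv huv
      nlinarith
    obtain ⟨n, hn⟩ := exists_nat_gt (C / |Bf K v - Bf K u|)
    have hn0 : 0 < n := by
      have h5 : (0:ℝ) < n := lt_of_le_of_lt (div_nonneg hC0 (abs_nonneg _)) hn
      exact_mod_cast h5
    have hkey := key n hn0
    have hnR : (0:ℝ) < n := Nat.cast_pos.2 hn0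
    have : C / n < |Bf K v - Bf K u| := by
      rw [div_lt_iff₀ hnR]
      rw [div_lt_iff₀ hcon] at hn
      nlinarith
    have heq : ((v - u) / n) * (gl K v - gl K u) = C / n := by rw [hC, div_mul_eq_mul_div]
    rw [heq] at hkey
    linarith
  have := abs_nonneg (Bf K v - Bf K u)
  have h0 : |Bf K v - Bf K u| = 0 := le_antisymm habs this
  have := abs_eq_zero.1 h0
  linarith

lemma FintGl_ge {u v : ℝ} (hg : gl K u ≤ 0) (hv : ∀ t, t < 0 → Ff K t ≤ v) :
    v * gl K u ≤ Fint K (gl K u) := by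
  have hb := int_le_of_Ico (v := v) hg (Ff_intble hconv' (gl K u) 0)
    (fun t ht => hv t ht.2)
  have h2 : Fint K 0 - Fint K (gl K u) = ∫ t in (gl K u)..(0:ℝ), Ff K t :=
    Fint_sub hconv' (gl K u) 0
  have h3 : Fint K 0 = 0 := by simp [Fint]
  rw [h3, zero_sub] at h2
  nlinarith [h2 ▸ hb]

lemma B_zero (hnonneg : ∀ u : ℝ, (0 : EReal) ≤ K u)
    (hconv : ∀ u v a b : ℝ, 0 ≤ a → 0 ≤ b → a + b = 1 →
      K (a * u + b * v) ≤ ((a : ℝ) : EReal) * K u + ((b : ℝ) : EReal) * K v)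
    (hdom1 : Set.Ioo (0:ℝ) 1 ⊆ {u : ℝ | K u ≠ ⊤})
    (hzero : ∃ u₀ ∈ Set.Icc (0:ℝ) 1, K u₀ = 0) :
    ∀ u ∈ Ioo (0:ℝ) 1, Bf K u = 0 := by
  have hhalf : (1/2 : ℝ) ∈ Ioo (0:ℝ) 1 := by norm_num
  set c := Bf K (1/2) with hc
  have hc_le : ∀ ε : ℝ, 0 < ε → c ≤ ε := by
    intro ε hε
    obtain ⟨u, hu, hku⟩ := kf_small hnonneg hconv hdom1 hzero hε
    calc c = Bf K u := B_const hconv' hhalf hu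
      _ ≤ kf K u := B_le_kf hconv' hu
      _ ≤ ε := hku
  have hc_ge : ∀ ε : ℝ, 0 < ε → -ε ≤ c := by
    intro ε hε
    by_cases hcase : ∀ w ∈ Ioo (0:ℝ) 1, 0 ≤ gl K w
    · -- left derivative everywhere nonnegative
      set G := gl K (1/2) with hG
      have hG0 : 0 ≤ G := hcase _ hhalf
      set u := min (1/2) (ε/(G+1)) with hudef
      have hu0 : 0 < u := lt_min (by norm_num) (div_pos hε (by linarith))
      have hu2 : u ≤ 1/2 := min_le_left _ _
      have hum : u ∈ Ioo (0:ℝ) 1 := ⟨hu0, by linarith⟩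
      have hglu0 : 0 ≤ gl K u := hcase _ hum
      have hgluG : gl K u ≤ G := gl_mono hconv' hum hhalf hu2
      have hF : 0 ≤ Fint K (gl K u) := Fint_nonneg hconv' hglu0
      have hkf : 0 ≤ kf K u := kf_nonneg hnonneg u
      have huε : u ≤ ε/(G+1) := min_le_right _ _
      have hq : u * (G+1) ≤ ε := by
        rw [← le_div_iff₀ (by linarith : (0:ℝ) < G+1)]; exact huε
      have : -ε ≤ Bf K u := by simp only [Bf]; nlinarith
      calc -ε ≤ Bf K u := this
        _ = c := (B_const hconv' hhalf hum).symm
    · push_neg at hcase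
      obtain ⟨w, hw, hglw⟩ := hcase
      set S := {z : ℝ | z ∈ Ioo (0:ℝ) 1 ∧ gl K z < 0} with hS
      have hSne : S.Nonempty := ⟨w, hw, hglw⟩
      have hSbdd : BddAbove S := ⟨1, fun z hz => hz.1.2.le⟩
      set s := sSup S with hsdef
      have hws : w ≤ s := le_csSup hSbdd ⟨hw, hglw⟩
      have hs0 : 0 < s := lt_of_lt_of_le hw.1 hws
      have hs1 : s ≤ 1 := csSup_le hSne (fun z hz => hz.1.2.le)
      set v := min s 1 with hvdef
      have hvs : v ≤ s := min_le_left _ _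
      have hv0 : 0 < v := lt_min hs0 one_pos
      have hFv : ∀ t, t < 0 → Ff K t ≤ v := by
        intro t ht
        rcases le_or_gt 1 s with h1 | h1
        · have : v = 1 := min_eq_right h1
          rw [this]; exact Ff_le_one hconv' t
        · have hveq : v = s := min_eq_left h1.le
          rw [hveq]
          refine Ff_le hconv' hs0.le fun ω hω hglω => ?_
          by_contra hcon
          push_neg at hcon
          have hωS : ω ∉ S := fun hmem => absurd (le_csSup hSbdd hmem) (not_le.2 hcon)
          have : 0 ≤ gl K ω := by
            by_contra hneg
            exact hωS ⟨hω, not_le.1 hneg⟩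
          linarith
      -- key bound for u ∈ S : Bf u ≥ (v - u) * gl u
      have hkey : ∀ u, u ∈ S → (v - u) * gl K u ≤ Bf K u := by
        intro u huS
        have hglu : gl K u < 0 := huS.2
        have hF := FintGl_ge hconv' hglu.le hFv
        have hkf := kf_nonneg hnonneg u
        simp only [Bf]
        nlinarith
      rcases lt_or_ge w s with hws' | hws'
      · -- pick u ∈ S close to s
        set δ := ε / (|gl K w| + 1) with hδdef
        have hδ0 : 0 < δ := div_pos hε (by positivity)
        have hc0 : max w (s - δ) < s := max_lt hws' (by linarith)
        obtain ⟨u, huS, hu⟩ := exists_lt_of_lt_csSup hSne hc0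
        have huw : w < u := lt_of_le_of_lt (le_max_left _ _) hu
        have huδ : s - δ < u := lt_of_le_of_lt (le_max_right _ _) hu
        have hus : u ≤ s := le_csSup hSbdd huS
        have hglwu : gl K w ≤ gl K u := gl_mono hconv' hw huS.1 huw.le
        have h1 : (v - u) * gl K u ≤ Bf K u := hkey u huS
        have h2 : δ * (|gl K w| + 1) = ε := by rw [hδdef]; field_simp
        have habs : gl K w ≤ 0 := (hglw).le
        have habs2 : |gl K w| = -(gl K w) := abs_of_nonpos habs
        have : -ε ≤ (v - u) * gl K u := by nlinarith [huS.2, abs_nonneg (gl K w)]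
        calc -ε ≤ Bf K u := this.trans h1
          _ = c := (B_const hconv' hhalf huS.1).symm
      · -- w = s, take u := w
        have hweq : w = s := le_antisymm hws hws'
        have h1 : (v - w) * gl K w ≤ Bf K w := hkey w ⟨hw, hglw⟩
        have h2 : 0 ≤ (v - w) * gl K w := by
          have : v - w ≤ 0 := by rw [hweq]; linarith
          nlinarith
        calc -ε ≤ Bf K w := by linarith
          _ = c := (B_const hconv' hhalf hw).symm
  have hc0 : c = 0 := by
    have h1 : c ≤ 0 := by
      refine le_of_forall_pos_le_add fun ε hε => ?_
      rw [zero_add]; exact hc_le ε hε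
    have h2 : 0 ≤ c := by
      refine le_of_forall_pos_le_add fun ε hε => ?_
      linarith [hc_ge ε hε]
    linarith
  intro u hu
  rw [B_const hconv' hu hhalf, ← hc, hc0]

lemma claimB (hnonneg : ∀ u : ℝ, (0 : EReal) ≤ K u)
    (hconv : ∀ u v a b : ℝ, 0 ≤ a → 0 ≤ b → a + b = 1 →
      K (a * u + b * v) ≤ ((a : ℝ) : EReal) * K u + ((b : ℝ) : EReal) * K v)
    (hdom1 : Set.Ioo (0:ℝ) 1 ⊆ {u : ℝ | K u ≠ ⊤})
    (hzero : ∃ u₀ ∈ Set.Icc (0:ℝ) 1, K u₀ = 0) {u : ℝ} (hu : u ∈ Ioo (0:ℝ) 1) :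
    gl K u * u - Fint K (gl K u) = kf K u := by
  have := B_zero hconv' hnonneg hconv hdom1 hzero u hu
  simp only [Bf] at this
  linarith

lemma claimA (hnonneg : ∀ u : ℝ, (0 : EReal) ≤ K u)
    (hconv : ∀ u v a b : ℝ, 0 ≤ a → 0 ≤ b → a + b = 1 →
      K (a * u + b * v) ≤ ((a : ℝ) : EReal) * K u + ((b : ℝ) : EReal) * K v)
    (hdom1 : Set.Ioo (0:ℝ) 1 ⊆ {u : ℝ | K u ≠ ⊤})
    (hzero : ∃ u₀ ∈ Set.Icc (0:ℝ) 1, K u₀ = 0) {u : ℝ} (hu : u ∈ Ioo (0:ℝ) 1) (x : ℝ) :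
    x * u - kf K u ≤ Fint K x := by
  have hB := claimB hconv' hnonneg hconv hdom1 hzero hu
  rcases le_or_gt (gl K u) x with h | h
  · have e1 : Fint K x - Fint K (gl K u) = ∫ t in (gl K u)..x, Ff K t := Fint_sub hconv' _ _
    have low : u * (x - gl K u) ≤ ∫ t in (gl K u)..x, Ff K t :=
      le_int_of_Ioc h (Ff_intble hconv' _ _) (fun t ht => le_Ff hconv' hu ht.1.le)
    nlinarith [e1 ▸ low]
  · have e1 : Fint K (gl K u) - Fint K x = ∫ t in x..(gl K u), Ff K t := Fint_sub hconv' _ _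
    have up : (∫ t in x..(gl K u), Ff K t) ≤ u * (gl K u - x) :=
      int_le_of_Ico h.le (Ff_intble hconv' _ _) (fun t ht => Ff_le' hconv' hu ht.2)
    nlinarith [e1 ▸ up]

end BSection

section Endgame

variable {K : ℝ → EReal}
variable (hconv' : ConvexOn ℝ (Ioo (0:ℝ) 1) (kf K))
variable (hnonneg : ∀ u : ℝ, (0 : EReal) ≤ K u)
variable (hconv : ∀ u v a b : ℝ, 0 ≤ a → 0 ≤ b → a + b = 1 →
      K (a * u + b * v) ≤ ((a : ℝ) : EReal) * K u + ((b : ℝ) : EReal) * K v)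
variable (hdom1 : Set.Ioo (0:ℝ) 1 ⊆ {u : ℝ | K u ≠ ⊤})
variable (hzero : ∃ u₀ ∈ Set.Icc (0:ℝ) 1, K u₀ = 0)
include hconv' hnonneg hconv hdom1 hzero

lemma iqf_interior {u : ℝ} (hu : u ∈ Ioo (0:ℝ) 1) :
    (⨆ x : ℝ, ((x * u - Fint K x : ℝ) : EReal)) = K u := by
  have hKu : ((kf K u : ℝ) : EReal) = K u := EReal.coe_toReal (hdom1 hu) (hKbot hnonneg u)
  refine le_antisymm (iSup_le fun x => ?_) ?_
  · rw [← hKu]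
    exact EReal.coe_le_coe_iff.2 (by linarith [claimA hconv' hnonneg hconv hdom1 hzero hu x])
  · rw [← hKu]
    have hB := claimB hconv' hnonneg hconv hdom1 hzero hu
    have h := le_iSup (fun x : ℝ => ((x * u - Fint K x : ℝ) : EReal)) (gl K u)
    rw [show gl K u * u - Fint K (gl K u) = kf K u from hB] at h
    exact h

omit hnonneg hconv hzero in
lemma iqf_outside (hdom2 : {u : ℝ | K u ≠ ⊤} ⊆ Set.Icc (0:ℝ) 1)
    {u : ℝ} (hu : u ∉ Icc (0:ℝ) 1) :
    (⨆ x : ℝ, ((x * u - Fint K x : ℝ) : EReal)) = K u := by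
  have hKu : K u = ⊤ := by
    by_contra h
    exact hu (hdom2 h)
  rw [hKu]
  refine iSup_eq_top.2 fun b hb => ?_
  obtain ⟨r, hr1, hr2⟩ := EReal.exists_between_coe_real hb
  rcases not_and_or.1 (fun h => hu (mem_Icc.2 ⟨h.1, h.2⟩) : ¬(0 ≤ u ∧ u ≤ 1)) with h | h
  · -- u < 0
    have hu0 : u < 0 := not_le.1 h
    set x := min ((r+1)/u) 0 with hx
    have hx0 : x ≤ 0 := min_le_right _ _
    have hFx : Fint K x ≤ 0 := Fint_nonpos hconv' hx0
    have hxc : x ≤ (r+1)/u := min_le_left _ _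
    have hmul : ((r+1)/u) * u ≤ x * u := mul_le_mul_of_nonpos_right hxc hu0.le
    rw [div_mul_cancel₀ _ hu0.ne] at hmul
    refine ⟨x, hr1.trans (EReal.coe_lt_coe_iff.2 ?_)⟩
    linarith
  · -- u > 1
    have hu1 : 1 < u := not_le.1 h
    set x := max ((r+1)/(u-1)) 0 with hx
    have hx0 : 0 ≤ x := le_max_right _ _
    have hFx : Fint K x ≤ x := Fint_le_self hconv' hx0
    have hxc : (r+1)/(u-1) ≤ x := le_max_left _ _
    have hmul : r + 1 ≤ x * (u - 1) := by
      rw [div_le_iff₀ (by linarith : (0:ℝ) < u - 1)] at hxc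
      linarith
    refine ⟨x, hr1.trans (EReal.coe_lt_coe_iff.2 ?_)⟩
    nlinarith

lemma iqf_zero (hlsc : LowerSemicontinuous K) :
    (⨆ x : ℝ, ((x * (0:ℝ) - Fint K x : ℝ) : EReal)) = K 0 := by
  have hhalf : (1/2 : ℝ) ∈ Ioo (0:ℝ) 1 := by norm_num
  have hFint0 : Fint K 0 = 0 := by simp [Fint]
  have hJ0 : (0 : EReal) ≤ ⨆ x : ℝ, ((x * (0:ℝ) - Fint K x : ℝ) : EReal) := by
    have h := le_iSup (fun x : ℝ => ((x * (0:ℝ) - Fint K x : ℝ) : EReal)) 0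
    simp only [zero_mul, hFint0, sub_zero] at h
    exact_mod_cast h
  refine le_antisymm (iSup_le fun x => ?_) ?_
  · -- coe (x * 0 - Fint x) ≤ K 0
    by_cases hK0 : K 0 = ⊤
    · rw [hK0]; exact le_top
    have hKu : ((kf K 0 : ℝ) : EReal) = K 0 := EReal.coe_toReal hK0 (hKbot hnonneg 0)
    rw [← hKu]
    refine EReal.coe_le_coe_iff.2 ?_
    refine le_of_forall_pos_le_add fun ε hε => ?_
    obtain ⟨M, hM⟩ : ∃ M : ℝ, M = |kf K (1/2) - kf K 0| + 1 := ⟨_, rfl⟩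
    have hM0 : (0:ℝ) < M := by rw [hM]; positivity
    obtain ⟨t, ht⟩ : ∃ t : ℝ, t = min 1 (min (ε/(2*M)) (ε/(2*(|x|+1)))) := ⟨_, rfl⟩
    have ht0 : 0 < t := by
      rw [ht]; refine lt_min one_pos (lt_min (by positivity) (by positivity))
    have ht1 : t ≤ 1 := ht ▸ min_le_left _ _
    have htM : t ≤ ε/(2*M) := ht ▸ (min_le_right _ _).trans (min_le_left _ _)
    have htx : t ≤ ε/(2*(|x|+1)) := ht ▸ (min_le_right _ _).trans (min_le_right _ _)
    have hch := chord_bound hnonneg hconv (p := 0) (q := 1/2) (t := t) hK0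
      (hdom1 hhalf) ht0.le ht1
    have harg : (1-t)*0 + t*(1/2) = t/2 := by ring
    rw [harg] at hch
    have hu'm : t/2 ∈ Ioo (0:ℝ) 1 := ⟨by linarith, by linarith⟩
    have hA := claimA hconv' hnonneg hconv hdom1 hzero hu'm x
    have hb1 : t * M ≤ ε/2 := by
      rw [le_div_iff₀ (by linarith : (0:ℝ) < 2*M)] at htM
      have h9 : t * (2*M) = 2*(t*M) := by ring
      linarith
    have hb2 : |x| * (t/2) ≤ ε/2 := by
      rw [le_div_iff₀ (by positivity : (0:ℝ) < 2*(|x|+1))] at htx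
      have h9 : t * (2*(abs x+1)) = 2*(t* abs x) + 2*t := by ring
      have h10 : (abs x)*(t/2) = (t* abs x)/2 := by ring
      linarith [ht0.le]
    have hxb : -(x * (t/2)) ≤ |x| * (t/2) := by
      rw [← neg_mul]
      exact mul_le_mul_of_nonneg_right (neg_le_abs x) (by linarith)
    have hchM : kf K (t/2) ≤ kf K 0 + t * M := by
      have habs : kf K (1/2) - kf K 0 ≤ |kf K (1/2) - kf K 0| := le_abs_self _
      nlinarith
    nlinarith
  · -- K 0 ≤ iSup
    by_contra hlt
    push_neg at hlt
    obtain ⟨r, hr1, hr2⟩ := EReal.exists_between_coe_real hlt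
    have hr0 : (0:ℝ) < r := by
      have h := lt_of_le_of_lt hJ0 hr1
      exact_mod_cast h
    obtain ⟨x₁, hx₁⟩ : ∃ y : ℝ, y = max (gl K (1/2)) 0 := ⟨_, rfl⟩
    have hx₁0 : 0 ≤ x₁ := hx₁ ▸ le_max_right _ _
    obtain ⟨δ, hδ0, hδ⟩ := Metric.eventually_nhds_iff.1 (hlsc 0 _ hr2)
    obtain ⟨u, hu⟩ : ∃ u : ℝ, u = min (min (δ/2) (1/2)) (r/(2*(x₁+1))) := ⟨_, rfl⟩
    have hu0 : 0 < u := by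
      rw [hu]; exact lt_min (lt_min (by linarith) (by norm_num)) (by positivity)
    have huδ : u < δ :=
      lt_of_le_of_lt (hu ▸ (min_le_left _ _).trans (min_le_left _ _)) (by linarith)
    have hu12 : u ≤ 1/2 := hu ▸ (min_le_left _ _).trans (min_le_right _ _)
    have hur : u ≤ r/(2*(x₁+1)) := hu ▸ min_le_right _ _
    have hux : x₁ * u < r := by
      rw [le_div_iff₀ (by positivity : (0:ℝ) < 2*(x₁+1))] at hur
      nlinarith
    have hum : u ∈ Ioo (0:ℝ) 1 := ⟨hu0, by linarith⟩
    have hKur : K u ≤ ((r:ℝ) : EReal) := by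
      rw [← iqf_interior hconv' hnonneg hconv hdom1 hzero hum]
      refine iSup_le fun x => EReal.coe_le_coe_iff.2 ?_
      rcases le_or_gt x 0 with hx | hx
      · have hterm : ((x * (0:ℝ) - Fint K x : ℝ) : EReal) < ((r:ℝ) : EReal) :=
          lt_of_le_of_lt (le_iSup (fun x : ℝ => ((x * (0:ℝ) - Fint K x : ℝ) : EReal)) x) hr1
        have hterm' : x * (0:ℝ) - Fint K x < r := EReal.coe_lt_coe_iff.1 hterm
        nlinarith
      rcases le_or_gt x x₁ with hxx | hxx
      · have hF : 0 ≤ Fint K x := Fint_nonneg hconv' hx.le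
        nlinarith
      · have e1 : Fint K x - Fint K x₁ = ∫ t in x₁..x, Ff K t := Fint_sub hconv' _ _
        have low : (1/2) * (x - x₁) ≤ ∫ t in x₁..x, Ff K t := by
          refine le_int_of_Ioc hxx.le (Ff_intble hconv' _ _) (fun t ht => ?_)
          exact le_Ff hconv' hhalf (le_trans (by rw [hx₁]; exact le_max_left _ _) ht.1.le)
        have hF1 : 0 ≤ Fint K x₁ := Fint_nonneg hconv' hx₁0
        nlinarith [e1 ▸ low]
    have hcontra := hδ (show dist u 0 < δ by
      rw [Real.dist_eq, sub_zero, abs_of_pos hu0]; exact huδ)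
    exact absurd hKur (not_le.2 hcontra)

lemma iqf_one (hlsc : LowerSemicontinuous K) :
    (⨆ x : ℝ, ((x * (1:ℝ) - Fint K x : ℝ) : EReal)) = K 1 := by
  have hhalf : (1/2 : ℝ) ∈ Ioo (0:ℝ) 1 := by norm_num
  have hFint0 : Fint K 0 = 0 := by simp [Fint]
  have hJ1 : (0 : EReal) ≤ ⨆ x : ℝ, ((x * (1:ℝ) - Fint K x : ℝ) : EReal) := by
    have h := le_iSup (fun x : ℝ => ((x * (1:ℝ) - Fint K x : ℝ) : EReal)) 0
    simp only [zero_mul, hFint0, sub_zero] at h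
    exact_mod_cast h
  refine le_antisymm (iSup_le fun x => ?_) ?_
  · by_cases hK1 : K 1 = ⊤
    · rw [hK1]; exact le_top
    have hKu : ((kf K 1 : ℝ) : EReal) = K 1 := EReal.coe_toReal hK1 (hKbot hnonneg 1)
    rw [← hKu]
    refine EReal.coe_le_coe_iff.2 ?_
    refine le_of_forall_pos_le_add fun ε hε => ?_
    obtain ⟨M, hM⟩ : ∃ M : ℝ, M = |kf K (1/2) - kf K 1| + 1 := ⟨_, rfl⟩
    have hM0 : (0:ℝ) < M := by rw [hM]; positivity
    obtain ⟨t, ht⟩ : ∃ t : ℝ, t = min 1 (min (ε/M) (ε/(|x|+1))) := ⟨_, rfl⟩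
    have ht0 : 0 < t := by rw [ht]; exact lt_min one_pos (lt_min (by positivity) (by positivity))
    have ht1 : t ≤ 1 := ht ▸ min_le_left _ _
    have htM : t ≤ ε/M := ht ▸ (min_le_right _ _).trans (min_le_left _ _)
    have htx : t ≤ ε/(|x|+1) := ht ▸ (min_le_right _ _).trans (min_le_right _ _)
    have hch := chord_bound hnonneg hconv (p := 1/2) (q := 1) (t := 1 - t/2)
      (hdom1 hhalf) hK1 (by linarith) (by linarith)
    have harg : (1-(1-t/2))*(1/2) + (1-t/2)*1 = 1 - t/4 := by ring
    rw [harg] at hch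
    have hu'm : 1 - t/4 ∈ Ioo (0:ℝ) 1 := ⟨by linarith, by linarith⟩
    have hA := claimA hconv' hnonneg hconv hdom1 hzero hu'm x
    have hb1 : (t/2) * M ≤ ε/2 := by
      rw [le_div_iff₀ hM0] at htM
      have h9 : (t/2)*M = (t*M)/2 := by ring
      linarith
    have hb2 : |x| * (t/4) ≤ ε/2 := by
      rw [le_div_iff₀ (by positivity : (0:ℝ) < |x|+1)] at htx
      have h9 : (abs x)*(t/4) = (t* abs x)/4 := by ring
      have h11 : t*(abs x+1) = t* abs x + t := by ring
      linarith [ht0.le, hε.le]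
    have hxb : x * (t/4) ≤ |x| * (t/4) := by
      exact mul_le_mul_of_nonneg_right (le_abs_self x) (by linarith)
    have hchM : kf K (1 - t/4) ≤ kf K 1 + (t/2) * M := by
      have habs : kf K (1/2) - kf K 1 ≤ |kf K (1/2) - kf K 1| := le_abs_self _
      nlinarith
    -- x*1 - Fint x = (x*(1-t/4) - Fint x) + x*(t/4) ≤ kf(1-t/4) + |x|(t/4)
    nlinarith
  · by_contra hlt
    push_neg at hlt
    obtain ⟨r, hr1, hr2⟩ := EReal.exists_between_coe_real hlt
    have hr0 : (0:ℝ) < r := by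
      have h := lt_of_le_of_lt hJ1 hr1
      exact_mod_cast h
    obtain ⟨s', hs1, hs2⟩ := EReal.exists_between_coe_real hr2
    have hrs : r < s' := EReal.coe_lt_coe_iff.1 hs1
    obtain ⟨x₀, hx₀⟩ : ∃ y : ℝ, y = min (gl K (1/2)) 0 := ⟨_, rfl⟩
    have hx₀0 : x₀ ≤ 0 := hx₀ ▸ min_le_right _ _
    obtain ⟨δ, hδ0, hδ⟩ := Metric.eventually_nhds_iff.1 (hlsc 1 _ hs2)
    obtain ⟨u, hu⟩ : ∃ u : ℝ, u = max (max (1 - δ/2) (1/2)) (1 - (s' - r)/(|x₀|+1)) := ⟨_, rfl⟩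
    have hu1 : u < 1 := by
      rw [hu]
      refine max_lt (max_lt (by linarith) (by norm_num)) (by
        have h99 : (0:ℝ) < (s' - r)/(|x₀|+1) := div_pos (by linarith) (by positivity)
        linarith)
    have hu12 : 1/2 ≤ u := hu ▸ (le_max_right _ _).trans (le_max_left _ _)
    have huδ : 1 - δ/2 ≤ u := hu ▸ (le_max_left _ _).trans (le_max_left _ _)
    have hus : 1 - (s' - r)/(|x₀|+1) ≤ u := hu ▸ le_max_right _ _
    have habs0 : |x₀| = -x₀ := abs_of_nonpos hx₀0
    have hux' : (-x₀) * (1 - u) ≤ s' - r := by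
      have h1 : 1 - u ≤ (s' - r)/(|x₀|+1) := by linarith
      rw [le_div_iff₀ (by positivity : (0:ℝ) < |x₀|+1)] at h1
      nlinarith [abs_nonneg x₀]
    have hum : u ∈ Ioo (0:ℝ) 1 := ⟨by linarith, hu1⟩
    have hterm : ∀ y : ℝ, y * 1 - Fint K y < r := fun y =>
      EReal.coe_lt_coe_iff.1
        (lt_of_le_of_lt (le_iSup (fun x : ℝ => ((x * (1:ℝ) - Fint K x : ℝ) : EReal)) y) hr1)
    have hKus : K u ≤ ((s':ℝ) : EReal) := by
      rw [← iqf_interior hconv' hnonneg hconv hdom1 hzero hum]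
      refine iSup_le fun x => EReal.coe_le_coe_iff.2 ?_
      rcases le_or_gt 0 x with hx | hx
      · have h1 := hterm x
        nlinarith
      rcases le_or_gt x₀ x with hxx | hxx
      · have h1 := hterm x
        have h2 : (-x) * (1 - u) ≤ (-x₀) * (1 - u) :=
          mul_le_mul_of_nonneg_right (by linarith) (by linarith)
        nlinarith
      · have e1 : Fint K x₀ - Fint K x = ∫ t in x..x₀, Ff K t := Fint_sub hconv' _ _
        have up : (∫ t in x..x₀, Ff K t) ≤ (1/2) * (x₀ - x) := by
          refine int_le_of_Ico hxx.le (Ff_intble hconv' _ _) (fun t ht => ?_)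
          exact Ff_le' hconv' hhalf (lt_of_lt_of_le ht.2 (by rw [hx₀]; exact min_le_left _ _))
        have h1 := hterm x₀
        have h2 : (x - x₀) * (u - 1/2) ≤ 0 :=
          mul_nonpos_iff.2 (Or.inr ⟨by linarith, by linarith⟩)
        nlinarith [e1 ▸ up]
    have hcontra := hδ (show dist u 1 < δ by
      rw [Real.dist_eq, abs_of_nonpos (by linarith : u - 1 ≤ 0)]; linarith)
    exact absurd hKus (not_le.2 hcontra)

end Endgame






end Stmt13Aux

theorem stmt13 (K : ℝ → EReal)
    (hnonneg : ∀ u : ℝ, (0 : EReal) ≤ K u)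
    (hconv : ∀ u v a b : ℝ, 0 ≤ a → 0 ≤ b → a + b = 1 →
      K (a * u + b * v) ≤ ((a : ℝ) : EReal) * K u + ((b : ℝ) : EReal) * K v)
    (hlsc : LowerSemicontinuous K)
    (hdom1 : Set.Ioo (0:ℝ) 1 ⊆ {u : ℝ | K u ≠ ⊤})
    (hdom2 : {u : ℝ | K u ≠ ⊤} ⊆ Set.Icc (0:ℝ) 1)
    (hzero : ∃ u₀ ∈ Set.Icc (0:ℝ) 1, K u₀ = 0) :
    ∃ X : ℝ → ℝ, Measurable X ∧
      (∀ u : ℝ, iqf ((volume : Measure ℝ).restrict (Set.Ioo (0:ℝ) 1)) X u = K u) ∧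
      (∀ ω ∈ Set.Ioo (0:ℝ) 1,
        HasDerivWithinAt (fun v => (K v).toReal) (X ω) (Set.Iio ω) ω) := by
  classical
  open Stmt13Aux in
  have hconv' : ConvexOn ℝ (Set.Ioo (0:ℝ) 1) (Stmt13Aux.kf K) :=
    Stmt13Aux.kf_convexOn hnonneg hconv hdom1
  refine ⟨Stmt13Aux.Xf K, Stmt13Aux.Xf_measurable hconv', ?_, ?_⟩
  · intro u
    have hidf : iqf ((volume : Measure ℝ).restrict (Set.Ioo (0:ℝ) 1)) (Stmt13Aux.Xf K) u
        = ⨆ x : ℝ, ((x * u - Stmt13Aux.Fint K x : ℝ) : EReal) := by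
      simp only [iqf, Stmt13Aux.idf_eq hconv']
    rw [hidf]
    by_cases hu : u ∈ Set.Ioo (0:ℝ) 1
    · exact Stmt13Aux.iqf_interior hconv' hnonneg hconv hdom1 hzero hu
    by_cases h0 : u = 0
    · subst h0; exact Stmt13Aux.iqf_zero hconv' hnonneg hconv hdom1 hzero hlsc
    by_cases h1 : u = 1
    · subst h1; exact Stmt13Aux.iqf_one hconv' hnonneg hconv hdom1 hzero hlsc
    · refine Stmt13Aux.iqf_outside hconv' hdom1 hdom2 fun hmem => ?_
      rcases eq_or_lt_of_le hmem.1 with h | h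
      · exact h0 h.symm
      rcases eq_or_lt_of_le hmem.2 with h' | h'
      · exact h1 h'
      exact hu ⟨h, h'⟩
  · intro ω hω
    have hX : Stmt13Aux.Xf K ω = Stmt13Aux.gl K ω := Set.piecewise_eq_of_mem _ _ _ hω
    rw [hX]
    exact Stmt13Aux.gl_hasDeriv hconv' hω
end

section
/- Let X be a random variable with P(X > 0) = 1, E[X] = 1 and E[X²] = b, and let a ∈ (0,1). Then P(X > a) ≥ (1−a)²/(b − a(2−a)). -/
open MeasureTheory Filter Set

theorem stmt16 {Ω : Type*} [MeasurableSpace Ω] (P : Measure Ω) [IsProbabilityMeasure P]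
    (X : Ω → ℝ) (hX : Measurable X) (a b : ℝ) (ha : a ∈ Set.Ioo (0:ℝ) 1)
    (hpos : P {ω | 0 < X ω} = 1)
    (hint : Integrable X P) (hint2 : Integrable (fun ω => X ω ^ 2) P)
    (hmean : ∫ ω, X ω ∂P = 1) (hsec : ∫ ω, X ω ^ 2 ∂P = b) :
    (1 - a) ^ 2 / (b - a * (2 - a)) ≤ (P {ω | a < X ω}).toReal := by
  obtain ⟨ha0, ha1⟩ := ha
  set S : Set Ω := {ω | a < X ω} with hSdef
  have hSm : MeasurableSet S := measurableSet_lt measurable_const hX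
  set p : ℝ := (P S).toReal with hpdef
  have hp0 : 0 ≤ p := ENNReal.toReal_nonneg
  set D : ℝ := b - a * (2 - a) with hDdef
  -- integrability of (X - a)^2
  have hsq : Integrable (fun ω => (X ω - a) ^ 2) P := by
    have : Integrable (fun ω => X ω ^ 2 - (2 * a) * X ω + a ^ 2) P :=
      (hint2.sub (hint.const_mul (2 * a))).add (integrable_const _)
    exact this.congr (Filter.Eventually.of_forall fun ω => by ring)
  have hIsq : ∫ ω, (X ω - a) ^ 2 ∂P = D := by
    have h1 : ∀ ω, (X ω - a) ^ 2 = X ω ^ 2 - (2 * a) * X ω + a ^ 2 := fun ω => by ring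
    calc ∫ ω, (X ω - a) ^ 2 ∂P
        = ∫ ω, (X ω ^ 2 - (2 * a) * X ω + a ^ 2) ∂P := by
          exact integral_congr_ae (Filter.Eventually.of_forall fun ω => h1 ω)
      _ = (∫ ω, (X ω ^ 2 - (2 * a) * X ω) ∂P) + ∫ _ω, (a ^ 2 : ℝ) ∂P :=
          integral_add (hint2.sub (hint.const_mul (2 * a))) (integrable_const _)
      _ = (∫ ω, X ω ^ 2 ∂P) - (∫ ω, (2 * a) * X ω ∂P) + ∫ _ω, (a ^ 2 : ℝ) ∂P := by
          rw [integral_sub hint2 (hint.const_mul (2 * a))]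
      _ = b - 2 * a * 1 + a ^ 2 := by
          rw [hsec, integral_const_mul, hmean, integral_const]
          simp
      _ = D := by rw [hDdef]; ring
  have hInd : Integrable (S.indicator fun _ => (1 : ℝ)) P :=
    (integrable_const (1 : ℝ)).indicator hSm
  have hIInd : ∫ ω, S.indicator (fun _ => (1 : ℝ)) ω ∂P = p := by
    rw [integral_indicator_const (1 : ℝ) hSm]
    simp [hpdef, Measure.real_def]
  have hI1 : ∫ ω, (X ω - a) ∂P = 1 - a := by
    rw [integral_sub hint (integrable_const a), hmean, integral_const]
    simp
  -- main family of inequalities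
  have main : ∀ l : ℝ, 0 < l → 2 * l * (1 - a) ≤ l ^ 2 * D + p := by
    intro l hl
    have hpt : ∀ ω, 2 * l * (X ω - a) ≤
        l ^ 2 * (X ω - a) ^ 2 + S.indicator (fun _ => (1 : ℝ)) ω := by
      intro ω
      by_cases hmem : ω ∈ S
      · rw [Set.indicator_of_mem hmem]
        nlinarith [sq_nonneg (l * (X ω - a) - 1)]
      · rw [Set.indicator_of_notMem hmem]
        have hXa : X ω - a ≤ 0 := by
          simp only [hSdef, Set.mem_setOf_eq, not_lt] at hmem
          linarith
        have h1 : 2 * l * (X ω - a) ≤ 0 :=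
          mul_nonpos_of_nonneg_of_nonpos (by positivity) hXa
        have h2 : 0 ≤ l ^ 2 * (X ω - a) ^ 2 := by positivity
        linarith
    have hmono : ∫ ω, 2 * l * (X ω - a) ∂P ≤
        ∫ ω, (l ^ 2 * (X ω - a) ^ 2 + S.indicator (fun _ => (1 : ℝ)) ω) ∂P := by
      refine integral_mono ((hint.sub (integrable_const a)).const_mul _)
        ((hsq.const_mul _).add hInd) hpt
    rw [integral_const_mul, hI1] at hmono
    rw [integral_add (hsq.const_mul _) hInd, integral_const_mul, hIsq, hIInd] at hmono
    linarith
  rcases le_or_gt D 0 with hD | hD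
  · have := div_nonpos_of_nonneg_of_nonpos (sq_nonneg (1 - a)) hD
    linarith
  · have hl : 0 < (1 - a) / D := div_pos (by linarith) hD
    have h := main ((1 - a) / D) hl
    have e1 : ((1 - a) / D) ^ 2 * D = (1 - a) ^ 2 / D := by
      field_simp
    have e2 : 2 * ((1 - a) / D) * (1 - a) = 2 * ((1 - a) ^ 2 / D) := by ring
    rw [e1, e2] at h
    linarith
end
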